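/- arXiv:1310.5201 — 4 statements merged into one kernel-verified Lean document; each statement's English description precedes it below -/
import Mathlib

section
/- Let a, b be positive integers and let n = a+b. For any order ideal I of [a]×[b], the sign-word of the promotion image ∂(I) is the leftward cyclic shift of the sign-word of I: s(∂I)_i = s(I)_{i+1} for 1 ≤ i ≤ n−1 and s(∂I)_n = s(I)_1. -/
open scoped symmDiff

open scoped Classical in
/-- The toggle `σ_x` on order ideals (lower sets) of a finite poset,
as an operation on finsets: send `I` to `I ∆ {x}` if that is again a
lower set, and to `I` otherwise. -/
noncomputable def toggle {P : Type*} [PartialOrder P] [DecidableEq P]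
    (x : P) (I : Finset P) : Finset P :=
  if IsLowerSet (↑(I ∆ {x}) : Set P) then I ∆ {x} else I

/-- The height function of an order ideal of `[a] × [b]`:
`h_I(k) = |k| + 2·#{elements of I in file k}`. -/
def ht (a b : ℕ) (I : Finset (Fin a × Fin b)) (k : ℤ) : ℤ :=
  |k| + 2 * (I.filter (fun p => ((p.2 : ℕ) : ℤ) - ((p.1 : ℕ) : ℤ) = k)).card

/-- The `i`-th letter (`1 ≤ i ≤ a+b`) of the sign-word of an order ideal
of `[a] × [b]`: `s(I)_i = h_I(i-a) - h_I(i-a-1)`. -/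
def sgn (a b : ℕ) (I : Finset (Fin a × Fin b)) (i : ℕ) : ℤ :=
  ht a b I ((i : ℤ) - (a : ℤ)) - ht a b I ((i : ℤ) - (a : ℤ) - 1)

/-!
Encode an order ideal `I` by its height function `h`: in file `k`, `I` consists exactly of the
elements of rank below `h k`, and `h` is `1`-Lipschitz with `h k ≡ k (mod 2)`. Elements of one file
never cover each other, so toggling them one after the other is the same as toggling each of them
in the original ideal, and the effect is the local move `h k ↦ h (k - 1) + h (k + 1) - h k`.
Sweeping through the files from left to right, induction shows that the height function of `∂ I`
is `k ↦ h (k + 1) + h (-a) - h (1 - a)` on `[-a, b - 1]`, while `h b = b` does not change: so every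
step of the new height function is the next step of the old one, and the last is the first.
-/

theorem List.filter_le_add_one_eq_append {α : Type*} (f : α → ℤ) {l : List α}
    (hl : l.Pairwise (fun x y => f x ≤ f y)) (t : ℤ) :
    l.filter (fun x => f x ≤ t + 1) =
      l.filter (fun x => f x ≤ t) ++ l.filter (fun x => f x = t + 1) := by
  induction l with
  | nil => rfl
  | cons x xs ih =>
    rw [List.pairwise_cons] at hl
    rcases lt_trichotomy (f x) (t + 1) with hx | hx | hx
    · simp [hx.le, Int.le_of_lt_add_one hx, hx.ne, ih hl.2]
    · have hle : xs.filter (fun y => f y ≤ t) = [] :=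
        List.filter_eq_nil_iff.mpr fun y hy => by have := hl.1 y hy; simp; omega
      have heq : xs.filter (fun y => f y ≤ t + 1) = xs.filter (fun y => f y = t + 1) :=
        List.filter_congr fun y hy => by have := hl.1 y hy; simp; omega
      simp [hx, hle, heq]
    · have hnil : ∀ g : α → Bool, (∀ y, g y → f y ≤ t + 1) → (x :: xs).filter g = [] :=
        fun g hg => List.filter_eq_nil_iff.mpr fun y hy hgy => by
          have := hg y hgy
          rcases List.mem_cons.mp hy with rfl | hy
          · omega
          · have := hl.1 y hy; omega
      rw [hnil _ (by simp), hnil _ (by simp; omega), hnil _ (by simp; omega), List.nil_append]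

namespace Promotion

section LowerSet

variable {P : Type*} [PartialOrder P] {s : Set P} {x : P}

theorem forall_lt_mem_iff_forall_covBy_mem [IsStronglyCoatomic P] (hs : IsLowerSet s) :
    (∀ y < x, y ∈ s) ↔ ∀ y, y ⋖ x → y ∈ s := by
  refine ⟨fun h y hyx => h y hyx.lt, fun h y hyx => ?_⟩
  obtain ⟨c, hyc, hcx⟩ := exists_le_covBy_of_lt hyx
  exact hs hyc (h c hcx)

theorem exists_gt_mem_iff_exists_covBy_mem [IsStronglyAtomic P] (hs : IsLowerSet s) :
    (∃ z ∈ s, x < z) ↔ ∃ z ∈ s, x ⋖ z := by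
  refine ⟨fun ⟨z, hz, hxz⟩ => ?_, fun ⟨z, hz, hxz⟩ => ⟨z, hz, hxz.lt⟩⟩
  obtain ⟨c, hxc, hcz⟩ := exists_covBy_le_of_lt hxz
  exact ⟨c, hs hcz hz, hxc⟩

end LowerSet

section Toggle

variable {P : Type*} [PartialOrder P] [DecidableEq P] {J J' : Finset P} {x y : P}

theorem isLowerSet_toggle (hJ : IsLowerSet (J : Set P)) (x : P) :
    IsLowerSet (toggle x J : Set P) := by
  unfold toggle
  split_ifs with h
  exacts [h, hJ]

theorem mem_toggle_of_ne (h : y ≠ x) : y ∈ toggle x J ↔ y ∈ J := by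
  unfold toggle
  split_ifs <;> simp [Finset.mem_symmDiff, h]

theorem mem_toggle_self (hJ : IsLowerSet (J : Set P)) :
    x ∈ toggle x J ↔ (∀ y < x, y ∈ J) ∧ (x ∈ J → ∃ z ∈ J, x < z) := by
  unfold toggle
  by_cases hx : x ∈ J
  · have herase : J ∆ {x} = J.erase x := by
      ext y; by_cases h : y = x <;> simp [Finset.mem_symmDiff, h, hx]
    have hlower : IsLowerSet (J.erase x : Set P) ↔ ¬∃ z ∈ J, x < z := by
      constructor
      · rintro hl ⟨z, hz, hxz⟩
        simpa using hl hxz.le (by simpa [Finset.mem_erase] using ⟨hz, hxz.ne'⟩)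
      · intro hmax u v hvu hu
        simp only [Finset.coe_erase, Set.mem_sdiff, Finset.mem_coe,
          Set.mem_singleton_iff] at hu ⊢
        refine ⟨hJ hvu hu.1, ?_⟩
        rintro rfl
        exact hmax ⟨u, hu.1, lt_of_le_of_ne hvu (Ne.symm hu.2)⟩
    rw [herase]
    split_ifs with h
    · exact iff_of_false (by simp) fun ⟨_, hup⟩ => hlower.mp h (hup hx)
    · exact iff_of_true hx ⟨fun y hy => hJ hy.le hx, fun _ => not_not.mp (mt hlower.mpr h)⟩
  · have hinsert : J ∆ {x} = insert x J := by
      ext y; by_cases h : y = x <;> simp [Finset.mem_symmDiff, h, hx]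
    have hlower : IsLowerSet ((insert x J : Finset P) : Set P) ↔ ∀ y < x, y ∈ J := by
      constructor
      · intro hl y hyx
        simpa [hyx.ne] using hl hyx.le (by simp : x ∈ ((insert x J : Finset P) : Set P))
      · intro hbelow u v hvu hu
        simp only [Finset.coe_insert, Set.mem_insert_iff, Finset.mem_coe] at hu ⊢
        rcases hu with rfl | hu
        · exact (eq_or_lt_of_le hvu).imp id (hbelow v)
        · exact Or.inr (hJ hvu hu)
    rw [hinsert]
    split_ifs with h
    · exact iff_of_true (Finset.mem_insert_self x J) ⟨hlower.mp h, fun hx' => absurd hx' hx⟩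
    · exact iff_of_false hx fun ⟨hbelow, _⟩ => h (hlower.mpr hbelow)

theorem isLowerSet_foldl_toggle (hJ : IsLowerSet (J : Set P)) (L : List P) :
    IsLowerSet ((L.foldl (fun J p => toggle p J) J : Finset P) : Set P) := by
  induction L generalizing J with
  | nil => exact hJ
  | cons x xs ih => exact ih (isLowerSet_toggle hJ x)

variable [IsStronglyAtomic P] [IsStronglyCoatomic P]

theorem mem_toggle_self_congr (hJ : IsLowerSet (J : Set P)) (hJ' : IsLowerSet (J' : Set P))
    (hx : x ∈ J ↔ x ∈ J') (hcov : ∀ z, z ⋖ x ∨ x ⋖ z → (z ∈ J ↔ z ∈ J')) :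
    x ∈ toggle x J ↔ x ∈ toggle x J' := by
  rw [mem_toggle_self hJ, mem_toggle_self hJ']
  simp only [← Finset.mem_coe]
  rw [forall_lt_mem_iff_forall_covBy_mem hJ,
    forall_lt_mem_iff_forall_covBy_mem hJ', exists_gt_mem_iff_exists_covBy_mem hJ,
    exists_gt_mem_iff_exists_covBy_mem hJ']
  simp only [Finset.mem_coe]
  refine and_congr (forall_congr' fun y => imp_congr_right fun hy => hcov y (.inl hy))
    (imp_congr hx (exists_congr fun z => ?_))
  exact ⟨fun ⟨hz, hxz⟩ => ⟨(hcov z (.inr hxz)).mp hz, hxz⟩,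
    fun ⟨hz, hxz⟩ => ⟨(hcov z (.inr hxz)).mpr hz, hxz⟩⟩

theorem mem_foldl_toggle (hJ : IsLowerSet (J : Set P)) {L : List P} (hnd : L.Nodup)
    (hL : L.Pairwise (IncompRel (· ⋖ ·))) (y : P) :
    y ∈ L.foldl (fun J p => toggle p J) J ↔ if y ∈ L then y ∈ toggle y J else y ∈ J := by
  induction L generalizing J with
  | nil => simp
  | cons x xs ih =>
    rw [List.nodup_cons] at hnd
    rw [List.pairwise_cons] at hL
    rw [List.foldl_cons, ih (isLowerSet_toggle hJ x) hnd.2 hL.2]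
    by_cases hyx : y = x
    · subst hyx
      simp [hnd.1]
    by_cases hy : y ∈ xs
    · have hinc := hL.1 y hy
      simp only [hy, if_true, List.mem_cons, or_true]
      refine mem_toggle_self_congr (isLowerSet_toggle hJ x) hJ (mem_toggle_of_ne hyx) ?_
      rintro z hz
      refine mem_toggle_of_ne ?_
      rintro rfl
      exact hz.elim hinc.1 hinc.2
    · simp [hy, hyx, mem_toggle_of_ne hyx]

end Toggle

section Grid

variable {a b : ℕ} {J : Finset (Fin a × Fin b)}

/-- `file` and `rank` are the coordinates of the grid turned by 45°, counted from `0`; in them the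
order is the light cone `|file q - file p| ≤ rank q - rank p` (`le_iff_file_rank`). -/
def file (p : Fin a × Fin b) : ℤ := ((p.2 : ℕ) : ℤ) - ((p.1 : ℕ) : ℤ)

def rank (p : Fin a × Fin b) : ℤ := ((p.1 : ℕ) : ℤ) + ((p.2 : ℕ) : ℤ)

theorem abs_file_le_rank (p : Fin a × Fin b) : |file p| ≤ rank p := by
  unfold file rank
  rw [abs_le]
  omega

theorem rank_lt_two_mul_add_file (p : Fin a × Fin b) : rank p < 2 * a + file p := by
  have := p.1.isLt
  unfold file rank
  omega

theorem rank_lt_two_mul_sub_file (p : Fin a × Fin b) : rank p < 2 * b - file p := by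
  have := p.2.isLt
  unfold file rank
  omega

theorem even_rank_sub_file (p : Fin a × Fin b) : Even (rank p - file p) :=
  ⟨p.1, by unfold rank file; ring⟩

theorem exists_file_rank {m r : ℤ} (hpar : Even (r - m)) (h0 : |m| ≤ r) (ha : r < 2 * a + m)
    (hb : r < 2 * b - m) : ∃ p : Fin a × Fin b, file p = m ∧ rank p = r := by
  obtain ⟨c, hc⟩ := hpar
  rw [abs_le] at h0
  refine ⟨(⟨c.toNat, by omega⟩, ⟨(c + m).toNat, by omega⟩), ?_, ?_⟩ <;>
    simp only [file, rank] <;> omega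

theorem eq_of_file_eq_of_rank_eq {p q : Fin a × Fin b} (hf : file p = file q)
    (hr : rank p = rank q) : p = q := by
  simp only [file, rank] at hf hr
  exact Prod.ext (Fin.ext (by omega)) (Fin.ext (by omega))

theorem le_iff_file_rank {p q : Fin a × Fin b} :
    p ≤ q ↔ |file q - file p| ≤ rank q - rank p := by
  rw [Prod.le_def, Fin.le_def, Fin.le_def, abs_le]
  unfold file rank
  omega

theorem lt_iff_file_rank {p q : Fin a × Fin b} :
    p < q ↔ |file q - file p| ≤ rank q - rank p ∧ rank p < rank q := by
  rw [lt_iff_le_and_ne, le_iff_file_rank]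
  refine and_congr_right fun h => ⟨fun hne => lt_of_le_of_ne ?_ ?_, fun hlt he => ?_⟩
  · linarith [abs_nonneg (file q - file p)]
  · intro hr
    refine hne (eq_of_file_eq_of_rank_eq ?_ hr)
    rw [hr, sub_self, abs_nonpos_iff, sub_eq_zero] at h
    exact h.symm
  · subst he
    exact lt_irrefl _ hlt

def fileSlice (J : Finset (Fin a × Fin b)) (m : ℤ) : Finset (Fin a × Fin b) :=
  J.filter (file · = m)

theorem mem_fileSlice {m : ℤ} {p : Fin a × Fin b} : p ∈ fileSlice J m ↔ p ∈ J ∧ file p = m :=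
  Finset.mem_filter

theorem ht_eq_abs_add_card (J : Finset (Fin a × Fin b)) (m : ℤ) :
    ht a b J m = |m| + 2 * (fileSlice J m).card :=
  rfl

theorem ht_eq_abs (J : Finset (Fin a × Fin b)) {m : ℤ} (hm : m ≤ -a ∨ b ≤ m) :
    ht a b J m = |m| := by
  rw [ht_eq_abs_add_card, Finset.card_eq_zero.mpr, Nat.cast_zero, mul_zero, add_zero]
  refine Finset.eq_empty_of_forall_notMem fun p hp => ?_
  have := rank_lt_two_mul_add_file p
  have := rank_lt_two_mul_sub_file p
  have := abs_file_le_rank p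
  rw [mem_fileSlice] at hp
  rw [abs_le] at *
  omega

theorem abs_le_ht (J : Finset (Fin a × Fin b)) (m : ℤ) : |m| ≤ ht a b J m := by
  rw [ht_eq_abs_add_card]
  omega

theorem even_ht_sub (J : Finset (Fin a × Fin b)) (m : ℤ) : Even (ht a b J m - m) := by
  refine ⟨max 0 (-m) + (fileSlice J m).card, ?_⟩
  rw [ht_eq_abs_add_card, abs_eq_max_neg]
  omega

theorem ht_le_two_mul_add (J : Finset (Fin a × Fin b)) {m : ℤ} (hm : -a ≤ m) :
    ht a b J m ≤ 2 * a + m := by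
  have hcard := Finset.card_le_card_of_injOn (s := fileSlice J m)
    (t := Finset.Ico (max 0 (-m)) (a : ℤ))
    (fun p : Fin a × Fin b => ((p.1 : ℕ) : ℤ))
    (fun p hp => by
      have := p.1.isLt
      rw [Finset.mem_coe, mem_fileSlice, file] at hp
      rw [Finset.mem_coe, Finset.mem_Ico]
      dsimp only
      omega)
    (fun p hp q hq hpq => by
      rw [Finset.mem_coe, mem_fileSlice, file] at hp hq
      dsimp only at hpq
      exact Prod.ext (Fin.ext (by omega)) (Fin.ext (by omega)))
  rw [Int.card_Ico] at hcard
  rw [ht_eq_abs_add_card, abs_eq_max_neg]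
  omega

theorem ht_le_two_mul_sub (J : Finset (Fin a × Fin b)) {m : ℤ} (hm : m ≤ b) :
    ht a b J m ≤ 2 * b - m := by
  have hcard := Finset.card_le_card_of_injOn (s := fileSlice J m)
    (t := Finset.Ico (max 0 m) (b : ℤ))
    (fun p : Fin a × Fin b => ((p.2 : ℕ) : ℤ))
    (fun p hp => by
      have := p.2.isLt
      rw [Finset.mem_coe, mem_fileSlice, file] at hp
      rw [Finset.mem_coe, Finset.mem_Ico]
      dsimp only
      omega)
    (fun p hp q hq hpq => by
      rw [Finset.mem_coe, mem_fileSlice, file] at hp hq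
      dsimp only at hpq
      exact Prod.ext (Fin.ext (by omega)) (Fin.ext (by omega)))
  rw [Int.card_Ico] at hcard
  rw [ht_eq_abs_add_card, abs_eq_max_neg]
  omega

end Grid

section Ideal

variable {a b : ℕ} {J : Finset (Fin a × Fin b)}

theorem rank_add_two_le_ht_of_mem (hJ : IsLowerSet (J : Set (Fin a × Fin b)))
    {p : Fin a × Fin b} (hpJ : p ∈ J) : rank p + 2 ≤ ht a b J (file p) := by
  have hp := abs_file_le_rank p
  rw [abs_le] at hp
  have hcard := Finset.card_le_card_of_surjOn (s := fileSlice J (file p))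
    (t := Finset.Icc (max 0 (-file p)) ((p.1 : ℕ) : ℤ)) (fun q => ((q.1 : ℕ) : ℤ))
    (fun i hi => by
      rw [Finset.mem_coe, Finset.mem_Icc] at hi
      obtain ⟨q, hqf, hqr⟩ := exists_file_rank (a := a) (b := b) (m := file p)
        (r := 2 * i + file p) ⟨i, by ring⟩ (by rw [abs_le]; omega)
        (by have := rank_lt_two_mul_add_file p; unfold rank file at *; omega)
        (by have := rank_lt_two_mul_sub_file p; unfold rank file at *; omega)
      refine ⟨q, ?_, by dsimp only; unfold rank file at *; omega⟩
      refine Finset.mem_coe.mpr (mem_fileSlice.mpr ⟨hJ ?_ hpJ, hqf⟩)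
      rw [le_iff_file_rank, hqf, sub_self, abs_zero, hqr]
      unfold rank file
      omega)
  rw [Int.card_Icc] at hcard
  rw [ht_eq_abs_add_card, abs_eq_max_neg]
  unfold rank file at *
  omega

theorem ht_le_rank_of_notMem (hJ : IsLowerSet (J : Set (Fin a × Fin b)))
    {p : Fin a × Fin b} (hpJ : p ∉ J) : ht a b J (file p) ≤ rank p := by
  have hp := abs_file_le_rank p
  rw [abs_le] at hp
  have hcard := Finset.card_le_card_of_injOn (s := fileSlice J (file p))
    (t := Finset.Ico (max 0 (-file p)) ((p.1 : ℕ) : ℤ)) (fun q => ((q.1 : ℕ) : ℤ))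
    (fun q hq => by
      rw [Finset.mem_coe, mem_fileSlice] at hq
      rw [Finset.mem_coe, Finset.mem_Ico]
      dsimp only
      have hqf := hq.2
      refine ⟨by unfold file at *; omega, lt_of_not_ge fun hle => hpJ (hJ ?_ hq.1)⟩
      rw [le_iff_file_rank, hqf, sub_self, abs_zero]
      unfold rank file at *
      omega)
    (fun q hq q' hq' hqq' => by
      rw [Finset.mem_coe, mem_fileSlice] at hq hq'
      dsimp only at hqq'
      exact eq_of_file_eq_of_rank_eq (hq.2.trans hq'.2.symm) (by unfold rank file at *; omega))
  rw [Int.card_Ico] at hcard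
  rw [ht_eq_abs_add_card, abs_eq_max_neg]
  unfold rank file at *
  omega

theorem mem_iff_rank_lt_ht (hJ : IsLowerSet (J : Set (Fin a × Fin b))) (p : Fin a × Fin b) :
    p ∈ J ↔ rank p < ht a b J (file p) :=
  ⟨fun hpJ => by linarith [rank_add_two_le_ht_of_mem hJ hpJ],
    fun hlt => by_contra fun hpJ => absurd (ht_le_rank_of_notMem hJ hpJ) (not_le.mpr hlt)⟩

theorem exists_mem_of_rank_lt_ht (hJ : IsLowerSet (J : Set (Fin a × Fin b))) {m r : ℤ}
    (hpar : Even (r - m)) (h0 : |m| ≤ r) (hr : r < ht a b J m) :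
    ∃ p ∈ J, file p = m ∧ rank p = r := by
  have hm : -a < m ∧ m < b := by
    by_contra h
    rw [ht_eq_abs J (by omega)] at hr
    exact absurd h0 (not_le.mpr hr)
  obtain ⟨p, hpf, hpr⟩ := exists_file_rank hpar h0
    (hr.trans_le (ht_le_two_mul_add J (by omega))) (hr.trans_le (ht_le_two_mul_sub J (by omega)))
  exact ⟨p, (mem_iff_rank_lt_ht hJ p).mpr (hpf ▸ hpr ▸ hr), hpf, hpr⟩

theorem ht_le_ht_add_one (hJ : IsLowerSet (J : Set (Fin a × Fin b))) {m n : ℤ}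
    (hmn : |m - n| = 1) : ht a b J m ≤ ht a b J n + 1 := by
  by_contra hlt
  obtain ⟨cm, hcm⟩ := even_ht_sub J m
  obtain ⟨cn, hcn⟩ := even_ht_sub J n
  have hn := abs_le_ht J n
  rw [abs_eq_max_neg] at hmn hn
  obtain ⟨p, hpJ, hpf, hpr⟩ := exists_mem_of_rank_lt_ht hJ (m := m) (r := ht a b J m - 2)
    ⟨cm - 1, by omega⟩ (by rw [abs_eq_max_neg]; omega) (by omega)
  have hpa := rank_lt_two_mul_add_file p
  have hpb := rank_lt_two_mul_sub_file p
  obtain ⟨q, hqf, hqr⟩ := exists_file_rank (a := a) (b := b) (m := n) (r := ht a b J m - 3)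
    ⟨cm - 1 + (m - n - 1) / 2, by omega⟩ (by rw [abs_eq_max_neg]; omega) (by omega) (by omega)
  have hqp : q < p := by
    rw [lt_iff_file_rank, hpf, hqf, hpr, hqr, abs_eq_max_neg]
    omega
  have hqJ := (mem_iff_rank_lt_ht hJ q).mp (hJ hqp.le hpJ)
  rw [hqf, hqr] at hqJ
  omega

theorem abs_ht_sub_ht_le (hJ : IsLowerSet (J : Set (Fin a × Fin b))) (m n : ℤ) :
    |ht a b J m - ht a b J n| ≤ |m - n| := by
  wlog hmn : m ≤ n generalizing m n
  · rw [abs_sub_comm, abs_sub_comm m]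
    exact this n m (by omega)
  induction n, hmn using Int.leInduction with
  | base => simp
  | succ n hmn ih =>
    have hstep : |ht a b J n - ht a b J (n + 1)| ≤ 1 :=
      abs_le.mpr ⟨by linarith [ht_le_ht_add_one hJ (m := n + 1) (n := n) (by norm_num)],
        by linarith [ht_le_ht_add_one hJ (m := n) (n := n + 1) (by norm_num)]⟩
    calc |ht a b J m - ht a b J (n + 1)|
        ≤ |ht a b J m - ht a b J n| + |ht a b J n - ht a b J (n + 1)| := abs_sub_le _ _ _
      _ ≤ |m - n| + 1 := add_le_add ih hstep
      _ = |m - (n + 1)| := by rw [abs_of_nonpos, abs_of_nonpos] <;> linarith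

end Ideal

section FileToggle

variable {a b : ℕ} {J : Finset (Fin a × Fin b)}

theorem forall_lt_mem_iff_rank_le_ht (hJ : IsLowerSet (J : Set (Fin a × Fin b)))
    (x : Fin a × Fin b) :
    (∀ y < x, y ∈ J) ↔
      rank x ≤ ht a b J (file x - 1) ∧ rank x ≤ ht a b J (file x + 1) := by
  obtain ⟨c, hc⟩ := even_rank_sub_file x
  have hxa := rank_lt_two_mul_add_file x
  have hxb := rank_lt_two_mul_sub_file x
  constructor
  · have hside : ∀ n, |n - file x| = 1 → (∀ y < x, y ∈ J) → rank x ≤ ht a b J n := by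
      intro n hn hbelow
      by_cases hr : |n| ≤ rank x - 1
      · rw [abs_eq_max_neg] at hn hr
        obtain ⟨y, hyf, hyr⟩ := exists_file_rank (a := a) (b := b) (m := n) (r := rank x - 1)
          ⟨c + (file x - n - 1) / 2, by omega⟩ (by rw [abs_eq_max_neg]; omega) (by omega)
          (by omega)
        have hyx : y < x := by
          rw [lt_iff_file_rank, hyf, hyr, abs_eq_max_neg]
          omega
        have hyJ := (mem_iff_rank_lt_ht hJ y).mp (hbelow y hyx)
        rw [hyf, hyr] at hyJ
        omega
      · linarith [abs_le_ht J n]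
    exact fun h => ⟨hside _ (by simp) h, hside _ (by simp) h⟩
  · rintro ⟨hminus, hplus⟩ y hyx
    rw [mem_iff_rank_lt_ht hJ]
    obtain ⟨d, hd⟩ := even_rank_sub_file y
    have h1 := abs_ht_sub_ht_le hJ (file y) (file x - 1)
    have h2 := abs_ht_sub_ht_le hJ (file y) (file x + 1)
    rw [lt_iff_file_rank] at hyx
    simp only [abs_eq_max_neg] at h1 h2 hyx
    omega

theorem exists_gt_mem_iff_rank_add_two_le_ht (hJ : IsLowerSet (J : Set (Fin a × Fin b)))
    (x : Fin a × Fin b) :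
    (∃ z ∈ J, x < z) ↔
      rank x + 2 ≤ ht a b J (file x - 1) ∨ rank x + 2 ≤ ht a b J (file x + 1) := by
  obtain ⟨c, hc⟩ := even_rank_sub_file x
  have hx := abs_file_le_rank x
  rw [abs_eq_max_neg] at hx
  constructor
  · rintro ⟨z, hzJ, hxz⟩
    rw [mem_iff_rank_lt_ht hJ] at hzJ
    obtain ⟨d, hd⟩ := even_rank_sub_file z
    have h1 := abs_ht_sub_ht_le hJ (file z) (file x - 1)
    have h2 := abs_ht_sub_ht_le hJ (file z) (file x + 1)
    rw [lt_iff_file_rank] at hxz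
    simp only [abs_eq_max_neg] at h1 h2 hxz
    omega
  · have hside : ∀ n, |n - file x| = 1 → rank x + 2 ≤ ht a b J n → ∃ z ∈ J, x < z := by
      intro n hn hr
      rw [abs_eq_max_neg] at hn
      obtain ⟨z, hzJ, hzf, hzr⟩ := exists_mem_of_rank_lt_ht hJ (m := n) (r := rank x + 1)
        ⟨c + (file x - n + 1) / 2, by omega⟩ (by rw [abs_eq_max_neg]; omega) (by omega)
      refine ⟨z, hzJ, ?_⟩
      rw [lt_iff_file_rank, hzf, hzr, abs_eq_max_neg]
      omega
    rintro (h | h)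
    exacts [hside _ (by simp) h, hside _ (by simp) h]

theorem mem_toggle_self_iff (hJ : IsLowerSet (J : Set (Fin a × Fin b))) (x : Fin a × Fin b) :
    x ∈ toggle x J ↔
      rank x < ht a b J (file x - 1) + ht a b J (file x + 1) - ht a b J (file x) := by
  rw [mem_toggle_self hJ, forall_lt_mem_iff_rank_le_ht hJ, exists_gt_mem_iff_rank_add_two_le_ht hJ,
    mem_iff_rank_lt_ht hJ]
  obtain ⟨c, hc⟩ := even_rank_sub_file x
  obtain ⟨c₀, hc₀⟩ := even_ht_sub J (file x)
  obtain ⟨c₁, hc₁⟩ := even_ht_sub J (file x - 1)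
  obtain ⟨c₂, hc₂⟩ := even_ht_sub J (file x + 1)
  have h1 := abs_ht_sub_ht_le hJ (file x - 1) (file x)
  have h2 := abs_ht_sub_ht_le hJ (file x + 1) (file x)
  simp only [abs_eq_max_neg] at h1 h2
  omega

theorem ht_eq_of_mem_iff (hJ : IsLowerSet (J : Set (Fin a × Fin b))) {m v : ℤ}
    (hpar : Even (v - m)) (h0 : |m| ≤ v) (ha : v ≤ 2 * a + m) (hb : v ≤ 2 * b - m)
    (hmem : ∀ p : Fin a × Fin b, file p = m → (p ∈ J ↔ rank p < v)) : ht a b J m = v := by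
  rcases lt_trichotomy (ht a b J m) v with hlt | heq | hgt
  · obtain ⟨p, hpf, hpr⟩ := exists_file_rank (a := a) (b := b) (even_ht_sub J m)
      (abs_le_ht J m) (by omega) (by omega)
    have hpJ := (hmem p hpf).mpr (hpr ▸ hlt)
    rw [mem_iff_rank_lt_ht hJ, hpf, hpr] at hpJ
    exact absurd hpJ (lt_irrefl _)
  · exact heq
  · obtain ⟨p, hpJ, hpf, hpr⟩ := exists_mem_of_rank_lt_ht hJ hpar h0 hgt
    exact absurd ((hmem p hpf).mp hpJ) (by omega)

theorem not_covBy_of_file_eq {p q : Fin a × Fin b} (h : file p = file q) : ¬p ⋖ q := by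
  intro hpq
  have hlt := lt_iff_file_rank.mp hpq.lt
  obtain ⟨c, hc⟩ := even_rank_sub_file p
  obtain ⟨d, hd⟩ := even_rank_sub_file q
  have hpa := rank_lt_two_mul_add_file p
  have hqb := rank_lt_two_mul_sub_file q
  have hp := abs_file_le_rank p
  rw [abs_eq_max_neg] at hp
  obtain ⟨r, hrf, hrr⟩ := exists_file_rank (a := a) (b := b) (m := file p + 1)
    (r := rank p + 1) ⟨c, by omega⟩ (by rw [abs_eq_max_neg]; omega) (by omega) (by omega)
  refine hpq.2 (c := r) (lt_iff_file_rank.mpr ⟨?_, ?_⟩) (lt_iff_file_rank.mpr ⟨?_, ?_⟩) <;>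
    simp only [hrf, hrr, h, abs_eq_max_neg] at hlt ⊢ <;> omega

theorem ht_foldl_toggle_file (hJ : IsLowerSet (J : Set (Fin a × Fin b))) {k : ℤ}
    (hka : 1 - a ≤ k) (hkb : k ≤ b - 1) {L : List (Fin a × Fin b)} (hnd : L.Nodup)
    (hL : ∀ p, p ∈ L ↔ file p = k) (m : ℤ) :
    ht a b (L.foldl (fun J p => toggle p J) J) m =
      if m = k then ht a b J (k - 1) + ht a b J (k + 1) - ht a b J k else ht a b J m := by
  have hinc : L.Pairwise (IncompRel (· ⋖ ·)) :=
    hnd.imp_of_mem fun hp hq _ =>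
      have hpq : file _ = file _ := ((hL _).mp hp).trans ((hL _).mp hq).symm
      ⟨not_covBy_of_file_eq hpq, not_covBy_of_file_eq hpq.symm⟩
  have hmem := mem_foldl_toggle hJ hnd hinc
  split_ifs with hm
  · subst hm
    obtain ⟨c₀, hc₀⟩ := even_ht_sub J m
    obtain ⟨c₁, hc₁⟩ := even_ht_sub J (m - 1)
    obtain ⟨c₂, hc₂⟩ := even_ht_sub J (m + 1)
    have h1 := abs_ht_sub_ht_le hJ (m - 1) m
    have h2 := abs_ht_sub_ht_le hJ (m + 1) m
    have h3 := abs_le_ht J (m - 1)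
    have h4 := abs_le_ht J (m + 1)
    have h5 := ht_le_two_mul_add J (m := m - 1) (by omega)
    have h6 := ht_le_two_mul_sub J (m := m + 1) (by omega)
    simp only [abs_eq_max_neg] at h1 h2 h3 h4
    refine ht_eq_of_mem_iff (isLowerSet_foldl_toggle hJ L) ⟨c₁ + c₂ - c₀, by omega⟩
      (by rw [abs_eq_max_neg]; omega) (by omega) (by omega) fun p hp => ?_
    rw [hmem, if_pos ((hL p).mpr hp), mem_toggle_self_iff hJ, hp]
  · have hslice : fileSlice (L.foldl (fun J p => toggle p J) J) m = fileSlice J m := by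
      ext p
      simp only [mem_fileSlice]
      refine and_congr_left fun hp => ?_
      rw [hmem, if_neg fun hpL => hm (hp ▸ (hL p).mp hpL)]
    rw [ht_eq_abs_add_card, ht_eq_abs_add_card, hslice]

end FileToggle

section Sweep

variable {a b : ℕ} {I : Finset (Fin a × Fin b)}

theorem one_sub_le_file (p : Fin a × Fin b) : 1 - (a : ℤ) ≤ file p := by
  have := p.1.isLt
  unfold file
  omega

theorem file_le_sub_one (p : Fin a × Fin b) : file p ≤ b - 1 := by
  have := p.2.isLt
  unfold file
  omega

theorem ht_foldl_toggle_filter_file_le (hI : IsLowerSet (I : Set (Fin a × Fin b)))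
    {l : List (Fin a × Fin b)} (hnd : l.Nodup) (hall : ∀ p, p ∈ l)
    (hsort : l.Pairwise (fun p q => file p ≤ file q)) {t : ℤ} (hta : -a ≤ t) (htb : t ≤ b - 1) :
    (∀ m : ℤ, -a ≤ m → m ≤ t →
      ht a b ((l.filter (file · ≤ t)).foldl (fun J p => toggle p J) I) m =
        ht a b I (m + 1) + ht a b I (-a) - ht a b I (1 - a)) ∧
    (∀ m : ℤ, t < m → ht a b ((l.filter (file · ≤ t)).foldl (fun J p => toggle p J) I) m =
      ht a b I m) := by
  induction t, hta using Int.leInduction with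
  | base =>
    have hnil : l.filter (file · ≤ -a) = [] :=
      List.filter_eq_nil_iff.mpr fun p _ => by have := one_sub_le_file p; simp; omega
    refine ⟨fun m hm1 hm2 => ?_, fun m _ => by rw [hnil, List.foldl_nil]⟩
    rw [hnil, List.foldl_nil, show m = -a by omega, show -(a : ℤ) + 1 = 1 - a by ring]
    ring
  | succ t hta ih =>
    obtain ⟨ih_le, ih_gt⟩ := ih (by omega)
    rw [List.filter_le_add_one_eq_append file hsort, List.foldl_append]
    have hfile := ht_foldl_toggle_file
      (isLowerSet_foldl_toggle hI (l.filter (file · ≤ t))) (k := t + 1)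
      (L := l.filter (file · = t + 1)) (by omega) htb (hnd.filter _) (fun p => by simp [hall p])
    refine ⟨fun m hm1 hm2 => ?_, fun m hm => ?_⟩
    · rw [hfile]
      split_ifs with hm
      · subst hm
        rw [show t + 1 - 1 = t by ring, ih_le t (by omega) le_rfl, ih_gt (t + 1 + 1) (by omega),
          ih_gt (t + 1) (by omega)]
        ring
      · exact ih_le m hm1 (by omega)
    · rw [hfile, if_neg (by omega), ih_gt m (by omega)]

end Sweep

end Promotion

theorem promotion_sign_word_is_left_cyclic_shift_general
    (a b : ℕ) (ha : 1 ≤ a)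
    (l : List (Fin a × Fin b)) (hnd : l.Nodup) (hall : ∀ p : Fin a × Fin b, p ∈ l)
    (hsort : l.Pairwise (fun p q =>
      ((p.2 : ℕ) : ℤ) - ((p.1 : ℕ) : ℤ) ≤ ((q.2 : ℕ) : ℤ) - ((q.1 : ℕ) : ℤ)))
    (I : Finset (Fin a × Fin b)) (hI : IsLowerSet (↑I : Set (Fin a × Fin b))) :
    (∀ i : ℕ, 1 ≤ i → i ≤ a + b - 1 →
      sgn a b (l.foldl (fun J p => toggle p J) I) i = sgn a b I (i + 1)) ∧
    sgn a b (l.foldl (fun J p => toggle p J) I) (a + b) = sgn a b I 1 := by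
  have hshift := (Promotion.ht_foldl_toggle_filter_file_le hI hnd hall hsort (t := b - 1)
    (by omega) le_rfl).1
  rw [List.filter_eq_self.mpr fun p _ => by simpa using Promotion.file_le_sub_one p] at hshift
  constructor
  · intro i hi1 hi2
    have h1 := hshift ((i : ℤ) - a) (by omega) (by omega)
    have h2 := hshift ((i : ℤ) - a - 1) (by omega) (by omega)
    simp only [sgn, h1, h2]
    push_cast
    ring_nf
  · have hb := Promotion.ht_eq_abs (l.foldl (fun J p => toggle p J) I) (m := b) (.inr le_rfl)
    have hIb := Promotion.ht_eq_abs I (m := b) (.inr le_rfl)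
    have h := hshift ((b : ℤ) - 1) (by omega) le_rfl
    rw [show (b : ℤ) - 1 + 1 = b by ring, hIb] at h
    simp only [sgn]
    push_cast
    rw [show (a + b : ℤ) - a = b by ring, show (1 : ℤ) - a - 1 = -a by ring, h, hb]
    ring

theorem promotion_sign_word_is_left_cyclic_shift
    (a b : ℕ) (ha : 1 ≤ a) (hb : 1 ≤ b)
    (l : List (Fin a × Fin b)) (hnd : l.Nodup) (hall : ∀ p : Fin a × Fin b, p ∈ l)
    (hsort : l.Pairwise (fun p q =>
      ((p.2 : ℕ) : ℤ) - ((p.1 : ℕ) : ℤ) ≤ ((q.2 : ℕ) : ℤ) - ((q.1 : ℕ) : ℤ)))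
    (I : Finset (Fin a × Fin b)) (hI : IsLowerSet (↑I : Set (Fin a × Fin b))) :
    (∀ i : ℕ, 1 ≤ i → i ≤ a + b - 1 →
      sgn a b (l.foldl (fun J p => toggle p J) I) i = sgn a b I (i + 1)) ∧
    sgn a b (l.foldl (fun J p => toggle p J) I) (a + b) = sgn a b I 1 :=
  promotion_sign_word_is_left_cyclic_shift_general a b ha l hnd hall hsort I hI
end

section
/- Let a, b be positive integers. The cardinality statistic I ↦ #I is ab/2-mesic under the action of promotion ∂ on J([a]×[b]): for every ∂-orbit O ⊆ J([a]×[b]), (1/#O)·Σ_{I∈O} #I = ab/2. -/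
open scoped symmDiff

/-!
Encode an order ideal `J` of `[a] × [b]` by its boundary, a lattice path of `a + b` unit steps,
through the set `rowSteps J` of the positions of its `a` row steps; this set determines `J`.
Toggling the elements of the file with index `d` exchanges the steps at positions `d` and `d + 1`
(at most one element of the file can be toggled), so promotion, which toggles the files in
increasing order, moves every step one position down cyclically. Hence `∂^(a+b) = id`, and along
`a + b` consecutive iterates each row step visits every position once. Since
`#J = ∑ rowSteps J - a(a-1)/2`, the sizes over a period add up to
`a(a+b)(a+b-1)/2 - (a+b)a(a-1)/2 = (a+b)ab/2`, and the average over a periodic orbit equals the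
average over a full period.
-/

open Finset

theorem List.foldl_eq_self_of_forall_mem {α β : Type*} {f : β → α → β} {s : β} :
    ∀ {l : List α}, (∀ y ∈ l, f s y = s) → l.foldl f s = s
  | [], _ => rfl
  | y :: l, h => by
    rw [List.foldl_cons, h y List.mem_cons_self]
    exact foldl_eq_self_of_forall_mem fun z hz => h z (List.mem_cons_of_mem y hz)

theorem List.foldl_eq_of_nodup_of_mem {α β : Type*} {f : β → α → β} {s : β} {x : α} :
    ∀ {l : List α}, l.Nodup → x ∈ l → (∀ y ∈ l, y ≠ x → f s y = s) →
      (∀ y ∈ l, y ≠ x → f (f s x) y = f s x) → l.foldl f s = f s x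
  | y :: l, hl, hx, hs, ht => by
    rw [List.nodup_cons] at hl
    rw [List.foldl_cons]
    by_cases hyx : y = x
    · subst hyx
      exact foldl_eq_self_of_forall_mem fun z hz =>
        ht z (mem_cons_of_mem _ hz) (ne_of_mem_of_not_mem hz hl.1)
    · rw [hs y mem_cons_self hyx]
      exact foldl_eq_of_nodup_of_mem hl.2 ((mem_cons.1 hx).resolve_left (Ne.symm hyx))
        (fun z hz => hs z (mem_cons_of_mem _ hz)) (fun z hz => ht z (mem_cons_of_mem _ hz))

theorem List.Pairwise.filter_append_filter_not {α : Type*} {p : α → Bool} :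
    ∀ {l : List α}, l.Pairwise (fun x y => p y → p x) →
      l.filter p ++ l.filter (fun x => !p x) = l
  | [], _ => rfl
  | x :: l, h => by
    rw [List.pairwise_cons] at h
    by_cases hx : p x
    · simp [hx, h.2.filter_append_filter_not]
    · have hl : ∀ y ∈ l, p y = false := fun y hy => by simpa using mt (h.1 y hy) hx
      rw [List.filter_cons_of_neg hx, List.filter_cons_of_pos (by simpa using hx),
        List.filter_eq_nil_iff.2 fun y hy => by simp [hl y hy],
        List.filter_eq_self.2 fun y hy => by simp [hl y hy]]
      rfl

section

variable {α : Type*} [DecidableEq α] {s : Finset α} {i j : α}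

theorem Finset.image_swap_eq_self (h : i ∈ s ↔ j ∈ s) : s.image (Equiv.swap i j) = s := by
  ext v
  rw [← Equiv.coe_toEmbedding, ← map_eq_image, mem_map_equiv, Equiv.symm_swap,
    Equiv.swap_apply_def]
  split_ifs with hi hj
  · exact hi ▸ h.symm
  · exact hj ▸ h
  · exact Iff.rfl

theorem Finset.image_swap_image_swap :
    (s.image (Equiv.swap i j)).image (Equiv.swap i j) = s := by
  simp [image_image, Function.comp_def]

theorem Finset.symmDiff_singleton_of_notMem (h : i ∉ s) : s ∆ {i} = insert i s := by
  ext v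
  by_cases hv : v = i <;> simp [mem_symmDiff, hv, h]

theorem Finset.symmDiff_singleton_of_mem (h : i ∈ s) : s ∆ {i} = s.erase i := by
  ext v
  by_cases hv : v = i <;> simp [mem_symmDiff, hv, h]

end

section

variable {P : Type*} [PartialOrder P] {x : P} {s : Set P}

theorem IsLowerSet.insert_of_forall_lt (hs : IsLowerSet s) (h : ∀ y < x, y ∈ s) :
    IsLowerSet (insert x s) := by
  rintro u v hvu (rfl | hu)
  · rcases hvu.lt_or_eq with hlt | rfl
    exacts [Or.inr (h v hlt), Or.inl rfl]
  · exact Or.inr (hs hvu hu)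

theorem IsLowerSet.diff_singleton_of_forall_gt (hs : IsLowerSet s)
    (h : ∀ y, x < y → y ∉ s) : IsLowerSet (s \ {x}) := by
  rintro u v hvu ⟨hu, hux⟩
  refine ⟨hs hvu hu, ?_⟩
  rintro rfl
  exact h u (lt_of_le_of_ne hvu (Ne.symm hux)) hu

end

section Toggle

variable {P : Type*} [PartialOrder P] [DecidableEq P] {x y : P} {I : Finset P}

theorem toggle_ne_self_iff : toggle x I ≠ I ↔ IsLowerSet (↑(I ∆ {x}) : Set P) := by
  unfold toggle
  split_ifs with h
  · exact iff_of_true (by rw [Ne, symmDiff_eq_left]; exact singleton_ne_empty x) h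
  · exact iff_of_false (not_not.2 rfl) h

theorem toggle_eq_symmDiff_of_ne (h : toggle x I ≠ I) : toggle x I = I ∆ {x} := by
  rw [toggle, if_pos (toggle_ne_self_iff.1 h)]

theorem toggle_ne_self_of_notMem (hI : IsLowerSet (I : Set P)) (hx : x ∉ I)
    (h : ∀ y < x, y ∈ I) : toggle x I ≠ I := by
  rw [toggle_ne_self_iff, symmDiff_singleton_of_notMem hx, coe_insert]
  exact hI.insert_of_forall_lt h

theorem toggle_ne_self_of_mem (hI : IsLowerSet (I : Set P)) (hx : x ∈ I)
    (h : ∀ y, x < y → y ∉ I) : toggle x I ≠ I := by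
  rw [toggle_ne_self_iff, symmDiff_singleton_of_mem hx, coe_erase]
  exact hI.diff_singleton_of_forall_gt h

theorem isLowerSet_toggle (hI : IsLowerSet (I : Set P)) :
    IsLowerSet (↑(toggle x I) : Set P) := by
  unfold toggle
  split_ifs with h
  exacts [h, hI]

theorem eq_of_toggle_eq_toggle (hx : toggle x I ≠ I) (h : toggle y I = toggle x I) : y = x := by
  have hy : toggle y I ≠ I := h ▸ hx
  rw [toggle_eq_symmDiff_of_ne hx, toggle_eq_symmDiff_of_ne hy] at h
  exact singleton_injective (symmDiff_right_injective I h)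

theorem eq_of_toggle_toggle_eq (hx : toggle x I ≠ I) (h : toggle y (toggle x I) = I) :
    y = x := by
  have hy : toggle y (toggle x I) ≠ toggle x I := by rw [h]; exact hx.symm
  rw [toggle_eq_symmDiff_of_ne hy, toggle_eq_symmDiff_of_ne hx, symmDiff_assoc,
    symmDiff_eq_left, bot_eq_empty, symmDiff_eq_empty] at h
  exact (singleton_injective h).symm

noncomputable def toggleSeq (l : List P) (I : Finset P) : Finset P :=
  l.foldl (fun J p => toggle p J) I

theorem toggleSeq_append (l₁ l₂ : List P) (I : Finset P) :
    toggleSeq (l₁ ++ l₂) I = toggleSeq l₂ (toggleSeq l₁ I) :=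
  List.foldl_append

theorem isLowerSet_toggleSeq (hI : IsLowerSet (I : Set P)) (l : List P) :
    IsLowerSet (↑(toggleSeq l I) : Set P) := by
  induction l generalizing I with
  | nil => exact hI
  | cons x l ih => exact ih (isLowerSet_toggle hI)

end Toggle

section Orbit

variable {α : Type*} {f : α → α} {x : α} {n : ℕ}

theorem Function.IsPeriodicPt.sum_range_mul {M : Type*} [AddCommMonoid M]
    (hx : IsPeriodicPt f n x) (g : α → M) (c : ℕ) :
    ∑ k ∈ range (n * c), g (f^[k] x) = c • ∑ k ∈ range n, g (f^[k] x) := by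
  induction c with
  | zero => simp
  | succ c ih =>
    rw [Nat.mul_succ, sum_range_add, ih, succ_nsmul]
    congr 1
    refine sum_congr rfl fun k _ => ?_
    rw [add_comm, Function.iterate_add_apply, (hx.mul_const c).eq]

theorem Function.IsPeriodicPt.sum_div_card_orbit {K : Type*} [Field K] [CharZero K]
    (hx : IsPeriodicPt f n x) (hn : 0 < n) {O : Finset α}
    (hO : ∀ y, y ∈ O ↔ ∃ k, f^[k] x = y) (g : α → K) :
    (∑ y ∈ O, g y) / #O = (∑ k ∈ range n, g (f^[k] x)) / n := by
  classical
  have hp : 0 < minimalPeriod f x := hx.minimalPeriod_pos hn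
  obtain ⟨c, rfl⟩ := hx.minimalPeriod_dvd
  have hc : (c : K) ≠ 0 := Nat.cast_ne_zero.2 (right_ne_zero_of_mul hn.ne')
  have hinj : Set.InjOn (f^[·] x) (range (minimalPeriod f x)) := by
    simpa only [coe_range] using iterate_injOn_Iio_minimalPeriod
  have hO' : O = (range (minimalPeriod f x)).image (f^[·] x) := by
    ext y
    rw [hO, mem_image]
    constructor
    · rintro ⟨k, rfl⟩
      exact ⟨k % minimalPeriod f x, mem_range.2 (Nat.mod_lt _ hp), iterate_mod_minimalPeriod_eq⟩
    · rintro ⟨k, -, rfl⟩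
      exact ⟨k, rfl⟩
  rw [hO', sum_image hinj, card_image_of_injOn hinj, card_range,
    (isPeriodicPt_minimalPeriod f x).sum_range_mul, nsmul_eq_mul, Nat.cast_mul,
    mul_comm _ (c : K), mul_div_mul_left _ _ hc]

end Orbit

/-- The composite of the exchanges of adjacent positions made by the files `0, …, T - 1`. -/
def cycleDown : ℕ → Equiv.Perm ℕ
  | 0 => 1
  | T + 1 => Equiv.swap T (T + 1) * cycleDown T

theorem cycleDown_apply (T s : ℕ) :
    cycleDown T s = if s = 0 then T else if s ≤ T then s - 1 else s := by
  induction T with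
  | zero =>
    rw [cycleDown, Equiv.Perm.coe_one, id]
    split_ifs <;> omega
  | succ T ih =>
    rw [cycleDown, Equiv.Perm.coe_mul, Function.comp_apply, ih, Equiv.swap_apply_def]
    split_ifs <;> omega

theorem cycleDown_val {m : ℕ} (i : Fin (m + 1)) :
    cycleDown m i = ((i - 1 : Fin (m + 1)) : ℕ) := by
  rw [cycleDown_apply, Fin.coe_sub_one]
  rcases eq_or_ne i 0 with rfl | h
  · rw [if_pos rfl]
    exact if_pos rfl
  · have hi : (i : ℕ) ≠ 0 := Fin.val_ne_iff.2 h
    rw [if_neg hi, if_pos (by omega), if_neg h]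

open Fin.NatCast in
theorem iterate_cycleDown {m : ℕ} (i : Fin (m + 1)) (k : ℕ) :
    (cycleDown m)^[k] i = ((i - k : Fin (m + 1)) : ℕ) := by
  induction k with
  | zero => simp
  | succ k ih =>
    rw [Function.iterate_succ_apply', ih, cycleDown_val, Nat.cast_succ, sub_add_eq_sub_sub]

theorem iterate_cycleDown_self {m : ℕ} (i : Fin (m + 1)) : (cycleDown m)^[m + 1] i = i := by
  rw [iterate_cycleDown, Fin.natCast_self, sub_zero]

open Fin.NatCast in
theorem sum_range_iterate_cycleDown {m : ℕ} (i : Fin (m + 1)) :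
    ∑ k ∈ range (m + 1), (cycleDown m)^[k] i = ∑ j ∈ range (m + 1), j := by
  rw [← Fin.sum_univ_eq_sum_range (fun k => (cycleDown m)^[k] i),
    ← Fin.sum_univ_eq_sum_range (fun j => j)]
  simp only [iterate_cycleDown, Fin.cast_val_eq_self]
  exact Equiv.sum_comp (Equiv.subLeft i) (fun j => (j : ℕ))

namespace GridIdeal

variable {a b : ℕ}

def rowLen (J : Finset (Fin a × Fin b)) (k : Fin a) : ℕ := #{ℓ | (k, ℓ) ∈ J}

def rowStep (J : Finset (Fin a × Fin b)) (k : Fin a) : ℕ := rowLen J k + k.rev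

def rowSteps (J : Finset (Fin a × Fin b)) : Finset ℕ := univ.image (rowStep J)

/-- The file `ℓ - k` of `x = (k, ℓ)`, shifted by `a - 1`. -/
def fileIndex (x : Fin a × Fin b) : ℕ := x.2 + x.1.rev

theorem rowLen_le (J : Finset (Fin a × Fin b)) (k : Fin a) : rowLen J k ≤ b :=
  (card_filter_le _ _).trans (card_fin b).le

theorem rowStep_lt (J : Finset (Fin a × Fin b)) (k : Fin a) : rowStep J k < a + b := by
  have := rowLen_le J k
  have := k.rev.isLt
  unfold rowStep
  omega

theorem rowStep_mem_rowSteps (J : Finset (Fin a × Fin b)) (k : Fin a) :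
    rowStep J k ∈ rowSteps J :=
  mem_image_of_mem _ (mem_univ k)

theorem lt_of_mem_rowSteps {J : Finset (Fin a × Fin b)} {s : ℕ} (hs : s ∈ rowSteps J) :
    s < a + b := by
  obtain ⟨k, -, rfl⟩ := mem_image.1 hs
  exact rowStep_lt J k

theorem card_eq_sum_rowLen (J : Finset (Fin a × Fin b)) : #J = ∑ k, rowLen J k := by
  simp only [rowLen, card_filter]
  rw [← Fintype.sum_prod_type' (f := fun k ℓ => if (k, ℓ) ∈ J then 1 else 0)]
  simp

theorem rowLen_insert {J : Finset (Fin a × Fin b)} {k : Fin a} {ℓ : Fin b} (hx : (k, ℓ) ∉ J)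
    (k' : Fin a) : rowLen (insert (k, ℓ) J) k' = rowLen J k' + if k' = k then 1 else 0 := by
  unfold rowLen
  split_ifs with h
  · subst h
    rw [← card_insert_of_notMem (s := {ℓ' | (k', ℓ') ∈ J}) (by simpa using hx)]
    congr 1
    ext ℓ'
    simp
  · rw [add_zero]
    congr 1
    ext ℓ'
    simp [h]

variable {J K : Finset (Fin a × Fin b)}

theorem mem_iff_lt_rowLen (hJ : IsLowerSet (J : Set (Fin a × Fin b))) {k : Fin a} {ℓ : Fin b} :
    (k, ℓ) ∈ J ↔ ℓ.val < rowLen J k := by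
  constructor
  · intro h
    calc ℓ.val < #(Iic ℓ) := by simp
      _ ≤ rowLen J k := card_le_card fun ℓ' hℓ' =>
        mem_filter.2 ⟨mem_univ _, hJ (Prod.mk_le_mk.2 ⟨le_rfl, mem_Iic.1 hℓ'⟩) h⟩
  · intro h
    by_contra h'
    have : rowLen J k ≤ #(Iio ℓ) := card_le_card fun ℓ' hℓ' => mem_Iio.2 <|
      lt_of_not_ge fun hle => h' (hJ (Prod.mk_le_mk.2 ⟨le_rfl, hle⟩) (mem_filter.1 hℓ').2)
    rw [Fin.card_Iio] at this
    omega

theorem rowLen_antitone (hJ : IsLowerSet (J : Set (Fin a × Fin b))) : Antitone (rowLen J) :=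
  fun _ _ hkk' => card_le_card fun ℓ hℓ => by
    simp only [mem_filter, mem_univ, true_and] at hℓ ⊢
    exact hJ (Prod.mk_le_mk.2 ⟨hkk', le_rfl⟩) hℓ

theorem rowStep_strictAnti (hJ : IsLowerSet (J : Set (Fin a × Fin b))) :
    StrictAnti (rowStep J) := fun k k' h => by
  have := rowLen_antitone hJ h.le
  have : (k'.rev : ℕ) < k.rev := Fin.rev_lt_rev.2 h
  unfold rowStep
  omega

theorem card_rowSteps (hJ : IsLowerSet (J : Set (Fin a × Fin b))) : #(rowSteps J) = a := by
  rw [rowSteps, card_image_of_injective _ (rowStep_strictAnti hJ).injective, card_fin]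

theorem sum_rowSteps (hJ : IsLowerSet (J : Set (Fin a × Fin b))) :
    ∑ s ∈ rowSteps J, s = #J + ∑ i ∈ range a, i := by
  rw [rowSteps, sum_image fun _ _ _ _ h => (rowStep_strictAnti hJ).injective h,
    card_eq_sum_rowLen, ← Fin.sum_univ_eq_sum_range]
  simp only [rowStep, sum_add_distrib]
  exact congrArg _ (Equiv.sum_comp Fin.revPerm (fun i => (i : ℕ)))

/-- `rowStep J ∘ Fin.rev` is the increasing enumeration of `rowSteps J`. -/
theorem rowSteps_injective (hJ : IsLowerSet (J : Set (Fin a × Fin b)))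
    (hK : IsLowerSet (K : Set (Fin a × Fin b))) (h : rowSteps J = rowSteps K) : J = K := by
  have hcomp : ∀ {L : Finset (Fin a × Fin b)}, IsLowerSet (L : Set (Fin a × Fin b)) →
      rowSteps L = rowSteps J →
      rowStep L ∘ Fin.rev = (rowSteps J).orderEmbOfFin (card_rowSteps hJ) := fun hL hLJ =>
    orderEmbOfFin_unique _ (fun k => hLJ ▸ rowStep_mem_rowSteps _ _)
      ((rowStep_strictAnti hL).comp Fin.rev_strictAnti)
  have hstep : rowStep J = rowStep K := by
    funext k
    simpa using congrFun ((hcomp hJ rfl).trans (hcomp hK h.symm).symm) k.rev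
  ext ⟨k, ℓ⟩
  have := congrFun hstep k
  unfold rowStep at this
  rw [mem_iff_lt_rowLen hJ, mem_iff_lt_rowLen hK, show rowLen J k = rowLen K k by omega]

theorem rowStep_insert (hJ : IsLowerSet (J : Set (Fin a × Fin b))) {x : Fin a × Fin b}
    (hK : IsLowerSet (↑(insert x J) : Set (Fin a × Fin b))) (hx : x ∉ J) :
    rowStep (insert x J) = Equiv.swap (fileIndex x) (fileIndex x + 1) ∘ rowStep J := by
  obtain ⟨k, ℓ⟩ := x
  have hstep : ∀ k', rowStep (insert (k, ℓ) J) k' = rowStep J k' + if k' = k then 1 else 0 :=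
    fun k' => by simp only [rowStep, rowLen_insert hx]; omega
  have hk : rowStep J k = fileIndex (k, ℓ) := by
    have h1 := (mem_iff_lt_rowLen hK).1 (mem_insert_self _ _)
    have h2 := (mem_iff_lt_rowLen hJ).not.1 hx
    rw [rowLen_insert hx, if_pos rfl] at h1
    simp only [rowStep, fileIndex]
    omega
  funext k'
  rw [Function.comp_apply, hstep]
  split_ifs with h
  · subst h
    rw [hk, Equiv.swap_apply_left]
  · have hne : rowStep J k' ≠ fileIndex (k, ℓ) := hk ▸ (rowStep_strictAnti hJ).injective.ne h
    have hne' : rowStep J k' ≠ fileIndex (k, ℓ) + 1 := fun he => h <|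
      (rowStep_strictAnti hK).injective (by rw [hstep, hstep, if_neg h, if_pos rfl, he, hk])
    rw [add_zero, Equiv.swap_apply_of_ne_of_ne hne hne']

theorem rowSteps_insert (hJ : IsLowerSet (J : Set (Fin a × Fin b))) {x : Fin a × Fin b}
    (hK : IsLowerSet (↑(insert x J) : Set (Fin a × Fin b))) (hx : x ∉ J) :
    rowSteps (insert x J) = (rowSteps J).image (Equiv.swap (fileIndex x) (fileIndex x + 1)) := by
  rw [rowSteps, rowSteps, rowStep_insert hJ hK hx, image_image]

theorem rowSteps_toggle (hJ : IsLowerSet (J : Set (Fin a × Fin b))) {x : Fin a × Fin b}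
    (h : toggle x J ≠ J) :
    rowSteps (toggle x J) = (rowSteps J).image (Equiv.swap (fileIndex x) (fileIndex x + 1)) := by
  have hK := isLowerSet_toggle (x := x) hJ
  rw [toggle_eq_symmDiff_of_ne h] at hK ⊢
  by_cases hx : x ∈ J
  · rw [symmDiff_singleton_of_mem hx] at hK ⊢
    rw [← insert_erase hx] at hJ
    conv_rhs => rw [← insert_erase hx, rowSteps_insert hK hJ (notMem_erase x J),
      image_swap_image_swap]
  · rw [symmDiff_singleton_of_notMem hx] at hK ⊢
    exact rowSteps_insert hJ hK hx

theorem rowLen_lt_of_lt_of_rowStep_add_one_notMem (hJ : IsLowerSet (J : Set (Fin a × Fin b)))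
    {k k' : Fin a} (hk' : k' < k) (hgap : rowStep J k + 1 ∉ rowSteps J) :
    rowLen J k < rowLen J k' := by
  have hprev : k.val - 1 < a := by omega
  have hj : rowLen J k < rowLen J ⟨k.val - 1, hprev⟩ := by
    refine lt_of_le_of_ne (rowLen_antitone hJ (Fin.le_def.2 (Nat.sub_le _ _))) fun he => hgap ?_
    have : rowStep J ⟨k.val - 1, hprev⟩ = rowStep J k + 1 := by
      simp only [rowStep, Fin.val_rev, ← he]
      omega
    exact this ▸ rowStep_mem_rowSteps J _
  exact hj.trans_le (rowLen_antitone hJ (Fin.le_def.2 (Nat.le_sub_one_of_lt hk')))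

theorem rowLen_lt_of_lt_of_rowStep_sub_one_notMem (hJ : IsLowerSet (J : Set (Fin a × Fin b)))
    {k k' : Fin a} (hk' : k < k') (hgap : rowStep J k - 1 ∉ rowSteps J) :
    rowLen J k' < rowLen J k := by
  have hnext : k.val + 1 < a := by omega
  have hj : rowLen J ⟨k.val + 1, hnext⟩ < rowLen J k := by
    refine lt_of_le_of_ne (rowLen_antitone hJ (Fin.le_def.2 (Nat.le_succ _))) fun he => hgap ?_
    have : rowStep J ⟨k.val + 1, hnext⟩ = rowStep J k - 1 := by
      simp only [rowStep, Fin.val_rev, he]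
      omega
    exact this ▸ rowStep_mem_rowSteps J _
  exact (rowLen_antitone hJ (show (⟨k.val + 1, hnext⟩ : Fin a) ≤ k' from hk')).trans_lt hj

theorem exists_fileIndex_eq_rowStep_toggle_ne (hJ : IsLowerSet (J : Set (Fin a × Fin b)))
    {k : Fin a} (hgap : rowStep J k + 1 ∉ rowSteps J) (hlt : rowStep J k + 1 < a + b) :
    ∃ x, fileIndex x = rowStep J k ∧ toggle x J ≠ J := by
  have hprev : ∀ k' < k, rowLen J k < rowLen J k' := fun k' hk' =>
    rowLen_lt_of_lt_of_rowStep_add_one_notMem hJ hk' hgap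
  have hb : rowLen J k < b := by
    rcases Nat.eq_zero_or_pos k.val with h0 | h0
    · simp only [rowStep, Fin.val_rev] at hlt
      omega
    · exact (hprev ⟨0, by omega⟩ (Fin.lt_def.2 h0)).trans_le (rowLen_le J _)
  refine ⟨(k, ⟨rowLen J k, hb⟩), rfl, toggle_ne_self_of_notMem hJ ?_ ?_⟩
  · exact (mem_iff_lt_rowLen hJ).not.2 (lt_irrefl _)
  · rintro ⟨k', ℓ'⟩ hlt'
    rw [mem_iff_lt_rowLen hJ]
    rcases Prod.lt_iff.1 hlt' with ⟨hk, hl⟩ | ⟨hk, hl⟩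
    · exact lt_of_le_of_lt hl (hprev k' hk)
    · exact lt_of_lt_of_le hl (rowLen_antitone hJ hk)

theorem exists_fileIndex_add_one_eq_rowStep_toggle_ne
    (hJ : IsLowerSet (J : Set (Fin a × Fin b))) {k : Fin a}
    (hgap : rowStep J k - 1 ∉ rowSteps J) (hpos : 0 < rowStep J k) :
    ∃ x, fileIndex x + 1 = rowStep J k ∧ toggle x J ≠ J := by
  have hnext : ∀ k', k < k' → rowLen J k' < rowLen J k := fun k' hk' =>
    rowLen_lt_of_lt_of_rowStep_sub_one_notMem hJ hk' hgap
  have hr : 0 < rowLen J k := by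
    by_cases hlast : k.val + 1 = a
    · simp only [rowStep, Fin.val_rev] at hpos
      omega
    · exact (Nat.zero_le _).trans_lt
        (hnext ⟨a - 1, by omega⟩ (Fin.lt_def.2 (show k.val < a - 1 by omega)))
  have hb : rowLen J k - 1 < b := by have := rowLen_le J k; omega
  refine ⟨(k, ⟨rowLen J k - 1, hb⟩), by simp only [fileIndex, rowStep]; omega,
    toggle_ne_self_of_mem hJ
      ((mem_iff_lt_rowLen hJ).2 (show rowLen J k - 1 < rowLen J k by omega)) ?_⟩
  rintro ⟨k', ℓ'⟩ hlt'
  rw [mem_iff_lt_rowLen hJ, not_lt]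
  rcases Prod.lt_iff.1 hlt' with ⟨hk, hl⟩ | ⟨hk, hl⟩
  · have := hnext k' hk
    have : rowLen J k - 1 ≤ ℓ' := hl
    omega
  · have := rowLen_antitone hJ (show k ≤ k' from hk)
    have : rowLen J k - 1 < ℓ' := hl
    omega

theorem exists_fileIndex_eq_toggle_ne (hJ : IsLowerSet (J : Set (Fin a × Fin b))) {d : ℕ}
    (hd : d + 1 < a + b) (h : d ∈ rowSteps J ↔ d + 1 ∉ rowSteps J) :
    ∃ x, fileIndex x = d ∧ toggle x J ≠ J := by
  by_cases hmem : d ∈ rowSteps J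
  · obtain ⟨k, -, rfl⟩ := mem_image.1 hmem
    exact exists_fileIndex_eq_rowStep_toggle_ne hJ (h.1 hmem) hd
  · obtain ⟨k, -, hk⟩ := mem_image.1 (not_not.1 (mt h.2 hmem))
    obtain ⟨x, hx, hne⟩ := exists_fileIndex_add_one_eq_rowStep_toggle_ne hJ (k := k)
      (by rwa [hk, Nat.add_sub_cancel]) (by omega)
    exact ⟨x, by omega, hne⟩

theorem rowSteps_toggleSeq_of_fileIndex_eq (hJ : IsLowerSet (J : Set (Fin a × Fin b)))
    {d : ℕ} (hd : d + 1 < a + b) {L : List (Fin a × Fin b)} (hL : L.Nodup)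
    (hmem : ∀ x, x ∈ L ↔ fileIndex x = d) :
    rowSteps (toggleSeq L J) = (rowSteps J).image (Equiv.swap d (d + 1)) := by
  -- Every effective toggle in the file leads to the unique ideal whose row steps are those of
  -- `J` with `d` and `d + 1` exchanged, so at most one element of the file acts.
  by_cases h : d ∈ rowSteps J ↔ d + 1 ∉ rowSteps J
  · obtain ⟨x, rfl, hx⟩ := exists_fileIndex_eq_toggle_ne hJ hd h
    have hK := isLowerSet_toggle (x := x) hJ
    rw [toggleSeq, List.foldl_eq_of_nodup_of_mem hL ((hmem x).2 rfl), rowSteps_toggle hJ hx]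
    · intro y hy hyx
      by_contra hne
      refine hyx (eq_of_toggle_eq_toggle hx (rowSteps_injective (isLowerSet_toggle hJ) hK ?_))
      rw [rowSteps_toggle hJ hne, rowSteps_toggle hJ hx, (hmem y).1 hy]
    · intro y hy hyx
      by_contra hne
      refine hyx (eq_of_toggle_toggle_eq hx (rowSteps_injective (isLowerSet_toggle hK) hJ ?_))
      rw [rowSteps_toggle hK hne, rowSteps_toggle hJ hx, (hmem y).1 hy, image_swap_image_swap]
  · have hfix : (rowSteps J).image (Equiv.swap d (d + 1)) = rowSteps J :=
      image_swap_eq_self (by tauto)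
    rw [toggleSeq, List.foldl_eq_self_of_forall_mem, hfix]
    intro y hy
    by_contra hne
    exact hne (rowSteps_injective (isLowerSet_toggle hJ) hJ
      (by rw [rowSteps_toggle hJ hne, (hmem y).1 hy, hfix]))

theorem rowSteps_toggleSeq_of_fileIndex_lt (hJ : IsLowerSet (J : Set (Fin a × Fin b)))
    {T : ℕ} (hT : T < a + b) {L : List (Fin a × Fin b)} (hL : L.Nodup)
    (hsort : L.Pairwise fun x y => fileIndex x ≤ fileIndex y)
    (hmem : ∀ x, x ∈ L ↔ fileIndex x < T) :
    rowSteps (toggleSeq L J) = (rowSteps J).image (cycleDown T) := by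
  induction T generalizing L with
  | zero =>
    rw [List.eq_nil_iff_forall_not_mem.2 fun x hx => Nat.not_lt_zero _ ((hmem x).1 hx)]
    simp [toggleSeq, cycleDown]
  | succ T ih =>
    set p : Fin a × Fin b → Bool := fun x => decide (fileIndex x < T)
    have hsplit := (hsort.imp (S := fun x y => p y → p x) fun h hy => by
      simp only [decide_eq_true_eq, p] at hy ⊢
      omega).filter_append_filter_not
    rw [← hsplit, toggleSeq_append,
      rowSteps_toggleSeq_of_fileIndex_eq (isLowerSet_toggleSeq hJ _) hT (hL.filter _),
      ih (by omega) (hL.filter _) (hsort.filter _), image_image]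
    · rfl
    · intro x
      simp only [List.mem_filter, hmem, decide_eq_true_eq, p]
      omega
    · intro x
      simp only [List.mem_filter, hmem, Bool.not_eq_eq_eq_not, Bool.not_true,
        decide_eq_false_iff_not, p]
      omega

structure IsFileOrder (l : List (Fin a × Fin b)) : Prop where
  nodup : l.Nodup
  mem : ∀ x, x ∈ l
  sorted : l.Pairwise fun x y => fileIndex x ≤ fileIndex y

section Promotion

variable {m : ℕ} {l : List (Fin a × Fin b)} {I : Finset (Fin a × Fin b)}

theorem rowSteps_toggleSeq (hm : a + b = m + 1) (hl : IsFileOrder l)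
    (hJ : IsLowerSet (J : Set (Fin a × Fin b))) :
    rowSteps (toggleSeq l J) = (rowSteps J).image (cycleDown m) :=
  rowSteps_toggleSeq_of_fileIndex_lt hJ (by omega) hl.nodup hl.sorted fun x =>
    iff_of_true (hl.mem x) (by simp only [fileIndex, Fin.val_rev]; omega)

theorem isLowerSet_iterate_toggleSeq (hI : IsLowerSet (I : Set (Fin a × Fin b))) (k : ℕ) :
    IsLowerSet (↑((toggleSeq l)^[k] I) : Set (Fin a × Fin b)) := by
  induction k with
  | zero => exact hI
  | succ k ih =>
    rw [Function.iterate_succ_apply']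
    exact isLowerSet_toggleSeq ih l

theorem rowSteps_iterate_toggleSeq (hm : a + b = m + 1) (hl : IsFileOrder l)
    (hI : IsLowerSet (I : Set (Fin a × Fin b))) (k : ℕ) :
    rowSteps ((toggleSeq l)^[k] I) = (rowSteps I).image (cycleDown m)^[k] := by
  induction k with
  | zero => simp
  | succ k ih =>
    rw [Function.iterate_succ_apply', rowSteps_toggleSeq hm hl (isLowerSet_iterate_toggleSeq hI k),
      ih, image_image, Function.iterate_succ']

theorem isPeriodicPt_toggleSeq (hm : a + b = m + 1) (hl : IsFileOrder l)
    (hI : IsLowerSet (I : Set (Fin a × Fin b))) :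
    Function.IsPeriodicPt (toggleSeq l) (m + 1) I := by
  refine rowSteps_injective (isLowerSet_iterate_toggleSeq hI _) hI ?_
  rw [rowSteps_iterate_toggleSeq hm hl hI]
  exact (image_congr fun s hs => iterate_cycleDown_self ⟨s, hm ▸ lt_of_mem_rowSteps hs⟩).trans
    image_id

theorem sum_card_iterate_toggleSeq (hm : a + b = m + 1) (hl : IsFileOrder l)
    (hI : IsLowerSet (I : Set (Fin a × Fin b))) :
    (∑ k ∈ range (m + 1), #((toggleSeq l)^[k] I)) * 2 = a * b * (a + b) := by
  have hcard : ∀ k, #((toggleSeq l)^[k] I) + ∑ i ∈ range a, i =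
      ∑ s ∈ rowSteps I, (cycleDown m)^[k] s := fun k => by
    rw [← sum_rowSteps (isLowerSet_iterate_toggleSeq hI k), rowSteps_iterate_toggleSeq hm hl hI,
      sum_image fun _ _ _ _ h => ((cycleDown m).injective.iterate k) h]
  have htotal : ∑ k ∈ range (m + 1), #((toggleSeq l)^[k] I) + (m + 1) * ∑ i ∈ range a, i =
      a * ∑ j ∈ range (m + 1), j := by
    calc _ = ∑ k ∈ range (m + 1), (#((toggleSeq l)^[k] I) + ∑ i ∈ range a, i) := by
          rw [sum_add_distrib, sum_const, card_range, smul_eq_mul]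
      _ = ∑ s ∈ rowSteps I, ∑ k ∈ range (m + 1), (cycleDown m)^[k] s := by
          rw [sum_congr rfl fun k _ => hcard k, sum_comm]
      _ = ∑ s ∈ rowSteps I, ∑ j ∈ range (m + 1), j :=
          sum_congr rfl fun s hs =>
            sum_range_iterate_cycleDown ⟨s, hm ▸ lt_of_mem_rowSteps hs⟩
      _ = _ := by rw [sum_const, card_rowSteps hI, smul_eq_mul]
  have ha : (∑ i ∈ range a, i) * 2 + a = a * a := by
    rw [sum_range_id_mul_two]
    cases a <;> simp [Nat.mul_succ]
  have hn := sum_range_id_mul_two (m + 1)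
  rw [Nat.add_sub_cancel] at hn
  zify at htotal ha hn hm ⊢
  linear_combination
    2 * htotal + (a : ℤ) * hn - ((m : ℤ) + 1) * ha - (a : ℤ) * (m + 1 + b) * hm

end Promotion

end GridIdeal

theorem promotion_order_ideal_cardinality_homomesy_general
    (a b : ℕ) (ha : 1 ≤ a)
    (l : List (Fin a × Fin b)) (hnd : l.Nodup) (hall : ∀ p : Fin a × Fin b, p ∈ l)
    (hsort : l.Pairwise (fun p q =>
      ((p.2 : ℕ) : ℤ) - ((p.1 : ℕ) : ℤ) ≤ ((q.2 : ℕ) : ℤ) - ((q.1 : ℕ) : ℤ)))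
    (O : Finset (Finset (Fin a × Fin b)))
    (hO : ∃ I : Finset (Fin a × Fin b), IsLowerSet (↑I : Set (Fin a × Fin b)) ∧
      ∀ J, J ∈ O ↔ ∃ k : ℕ, (fun J' => l.foldl (fun J'' p => toggle p J'') J')^[k] I = J) :
    (∑ J ∈ O, (J.card : ℚ)) / O.card = (a : ℚ) * (b : ℚ) / 2 := by
  obtain ⟨I, hI, hOI⟩ := hO
  obtain ⟨m, hm⟩ : ∃ m, a + b = m + 1 := ⟨a + b - 1, by omega⟩
  have hl : GridIdeal.IsFileOrder l := ⟨hnd, hall, hsort.imp fun {x y} h => by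
    have := x.1.isLt
    have := y.1.isLt
    simp only [GridIdeal.fileIndex, Fin.val_rev]
    omega⟩
  have hsum := GridIdeal.sum_card_iterate_toggleSeq hm hl hI
  rw [hm] at hsum
  rw [(GridIdeal.isPeriodicPt_toggleSeq hm hl hI).sum_div_card_orbit m.succ_pos hOI,
    div_eq_div_iff (by positivity) two_ne_zero]
  exact_mod_cast hsum

theorem promotion_order_ideal_cardinality_homomesy
    (a b : ℕ) (ha : 1 ≤ a) (hb : 1 ≤ b)
    (l : List (Fin a × Fin b)) (hnd : l.Nodup) (hall : ∀ p : Fin a × Fin b, p ∈ l)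
    (hsort : l.Pairwise (fun p q =>
      ((p.2 : ℕ) : ℤ) - ((p.1 : ℕ) : ℤ) ≤ ((q.2 : ℕ) : ℤ) - ((q.1 : ℕ) : ℤ)))
    (O : Finset (Finset (Fin a × Fin b)))
    (hO : ∃ I : Finset (Fin a × Fin b), IsLowerSet (↑I : Set (Fin a × Fin b)) ∧
      ∀ J, J ∈ O ↔ ∃ k : ℕ, (fun J' => l.foldl (fun J'' p => toggle p J'') J')^[k] I = J) :
    (∑ J ∈ O, (J.card : ℚ)) / O.card = (a : ℚ) * (b : ℚ) / 2 :=
  promotion_order_ideal_cardinality_homomesy_general a b ha l hnd hall hsort O hO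
end

section
/- Let a, b be positive integers, let I be an order ideal of [a]×[b] with sign-word s = s(I), and let s' = s(Φ_J(I)) be the sign-word of the rowmotion image of I. Then for every 1 ≤ i ≤ a+b−1, one has (s_i, s_{i+1}) = (−1, +1) if and only if (s'_i, s'_{i+1}) = (+1, −1). -/
open scoped Classical in
/-- Rowmotion on order ideals of a finite poset: `I` maps to the lower set
generated by the minimal elements of the complement of `I`. -/
noncomputable def rowmotion {P : Type*} [PartialOrder P] [Fintype P]
    (I : Finset P) : Finset P :=
  Finset.univ.filter (fun y => ∃ m, m ∉ I ∧ (∀ z ∉ I, z ≤ m → z = m) ∧ y ≤ m)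

/-!
Extend an order ideal `I` of `[a] × [b]` to the order ideal `S` of `ℤ × ℤ` obtained by adding
every point with a negative coordinate. On file `k`, `S` is exactly the set of points whose first
coordinate is below `c(k) = max(0, -k) + #(I ∩ file k)`, and `h_I(k) = 2 c(k) + k`, so the sign
word records the steps `c(k) - c(k-1) ∈ {-1, 0}`. A valley `(-1, +1)` at position `i` says that
the first point of file `i - a` outside `S` has both lower covers in `S`, i.e. is a minimal
element of the complement; a peak `(+1, -1)` says that the last point of that file in `S` is
maximal. Rowmotion turns the minimal elements of the complement of `I` into the maximal elements
of `Φ_J(I)`.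
-/

namespace GridIdeal

section FileCut

variable {S : Set (ℤ × ℤ)} {g : ℤ → ℤ}

theorem mem_iff_of_sub_eq (hg : ∀ x y, (x, y) ∈ S ↔ x < g (y - x)) {x y k : ℤ}
    (h : y - x = k) : (x, y) ∈ S ↔ x < g k :=
  h ▸ hg x y

theorem cut_succ_le (hS : IsLowerSet S) (hg : ∀ x y, (x, y) ∈ S ↔ x < g (y - x)) (k : ℤ) :
    g (k + 1) ≤ g k := by
  by_contra! h
  have hmem : (g k, g k + k + 1) ∈ S := (mem_iff_of_sub_eq hg (k := k + 1) (by ring)).2 h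
  have := hS (Prod.mk_le_mk.2 ⟨le_rfl, by omega⟩ : (g k, g k + k) ≤ _) hmem
  exact lt_irrefl _ ((mem_iff_of_sub_eq hg (k := k) (by ring)).1 this)

theorem cut_le_succ_add_one (hS : IsLowerSet S) (hg : ∀ x y, (x, y) ∈ S ↔ x < g (y - x))
    (k : ℤ) : g k ≤ g (k + 1) + 1 := by
  by_contra! h
  have hmem : (g (k + 1) + 1, g (k + 1) + k + 1) ∈ S :=
    (mem_iff_of_sub_eq hg (k := k) (by ring)).2 h
  have := hS (Prod.mk_le_mk.2 ⟨by omega, le_rfl⟩ : (g (k + 1), g (k + 1) + k + 1) ≤ _) hmem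
  exact lt_irrefl _ ((mem_iff_of_sub_eq hg (k := k + 1) (by ring)).1 this)

theorem minimal_not_mem_iff_of_cut (hS : IsLowerSet S)
    (hg : ∀ x y, (x, y) ∈ S ↔ x < g (y - x)) {x y k : ℤ} (hk : y - x = k) :
    Minimal (· ∉ S) (x, y) ↔ x = g k ∧ g (k - 1) = g k + 1 ∧ g (k + 1) = g k := by
  have mem {u v j : ℤ} (h : v - u = j) := mem_iff_of_sub_eq hg h
  have h₁ := cut_succ_le hS hg k
  have h₂ := cut_succ_le hS hg (k - 1)
  have h₃ := cut_le_succ_add_one hS hg (k - 1)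
  rw [sub_add_cancel] at h₂ h₃
  rw [minimal_iff_forall_lt]
  constructor
  · rintro ⟨hout, hbelow⟩
    have c₁ := hbelow (y := (x - 1, y - 1)) (Prod.lt_iff.2 (.inl ⟨by simp, by simp⟩))
    have c₂ := hbelow (y := (x - 1, y)) (Prod.lt_iff.2 (.inl ⟨by simp, le_rfl⟩))
    have c₃ := hbelow (y := (x, y - 1)) (Prod.lt_iff.2 (.inr ⟨le_rfl, by simp⟩))
    rw [not_not, mem (by omega : y - 1 - (x - 1) = k)] at c₁
    rw [not_not, mem (by omega : y - (x - 1) = k + 1)] at c₂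
    rw [not_not, mem (by omega : y - 1 - x = k - 1)] at c₃
    rw [mem hk] at hout
    omega
  · rintro ⟨rfl, hpred, hsucc⟩
    refine ⟨by rw [mem hk]; exact lt_irrefl _, fun w hw hwS => hwS ?_⟩
    rcases Prod.lt_iff.1 hw with ⟨hw₁, hw₂⟩ | ⟨hw₁, hw₂⟩
    · exact hS (Prod.mk_le_mk.2 ⟨by omega, hw₂⟩ : w ≤ (g k - 1, y))
        ((mem (by omega : y - (g k - 1) = k + 1)).2 (by omega))
    · exact hS (Prod.mk_le_mk.2 ⟨hw₁, by omega⟩ : w ≤ (g k, y - 1))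
        ((mem (by omega : y - 1 - g k = k - 1)).2 (by omega))

theorem maximal_mem_iff_of_cut (hS : IsLowerSet S) (hg : ∀ x y, (x, y) ∈ S ↔ x < g (y - x))
    {x y k : ℤ} (hk : y - x = k) :
    Maximal (· ∈ S) (x, y) ↔ x = g k - 1 ∧ g (k - 1) = g k ∧ g (k + 1) = g k - 1 := by
  have mem {u v j : ℤ} (h : v - u = j) := mem_iff_of_sub_eq hg h
  have h₁ := cut_le_succ_add_one hS hg k
  have h₂ := cut_succ_le hS hg (k - 1)
  rw [sub_add_cancel] at h₂
  rw [maximal_iff_forall_gt]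
  constructor
  · rintro ⟨hin, habove⟩
    have c₁ := habove (y := (x + 1, y + 1)) (Prod.lt_iff.2 (.inl ⟨by simp, by simp⟩))
    have c₂ := habove (y := (x + 1, y)) (Prod.lt_iff.2 (.inl ⟨by simp, le_rfl⟩))
    have c₃ := habove (y := (x, y + 1)) (Prod.lt_iff.2 (.inr ⟨le_rfl, by simp⟩))
    rw [mem (by omega : y + 1 - (x + 1) = k)] at c₁
    rw [mem (by omega : y - (x + 1) = k - 1)] at c₂
    rw [mem (by omega : y + 1 - x = k + 1)] at c₃
    rw [mem hk] at hin
    omega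
  · rintro ⟨rfl, hpred, hsucc⟩
    refine ⟨by rw [mem hk]; omega, fun w hw hwS => ?_⟩
    rcases Prod.lt_iff.1 hw with ⟨hw₁, hw₂⟩ | ⟨hw₁, hw₂⟩
    · have := hS (Prod.mk_le_mk.2 ⟨by omega, hw₂⟩ : (g k, y) ≤ w) hwS
      rw [mem (by omega : y - g k = k - 1)] at this
      omega
    · have := hS (Prod.mk_le_mk.2 ⟨hw₁, by omega⟩ : (g k - 1, y + 1) ≤ w) hwS
      rw [mem (by omega : y + 1 - (g k - 1) = k + 1)] at this
      omega

end FileCut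

section Grid

variable {a b : ℕ} {I : Finset (Fin a × Fin b)}

def embed (p : Fin a × Fin b) : ℤ × ℤ := ((p.1 : ℕ), (p.2 : ℕ))

def file (p : Fin a × Fin b) : ℤ := (p.2 : ℕ) - (p.1 : ℕ)

theorem embed_eq_iff {p : Fin a × Fin b} {x y : ℤ} :
    embed p = (x, y) ↔ ((p.1 : ℕ) : ℤ) = x ∧ ((p.2 : ℕ) : ℤ) = y :=
  Prod.ext_iff

theorem embed_le_embed {p q : Fin a × Fin b} : embed p ≤ embed q ↔ p ≤ q := by
  simp only [embed, Nat.cast_le, Prod.le_def, Fin.le_def]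

theorem embed_injective : Function.Injective (embed : Fin a × Fin b → ℤ × ℤ) := fun _ _ h =>
  le_antisymm (embed_le_embed.1 h.le) (embed_le_embed.1 h.ge)

theorem exists_embed_eq {x y : ℤ} (hx : 0 ≤ x) (hy : 0 ≤ y) (hxa : x < a) (hyb : y < b) :
    ∃ p : Fin a × Fin b, embed p = (x, y) :=
  ⟨(⟨x.toNat, by omega⟩, ⟨y.toNat, by omega⟩), embed_eq_iff.2 (by simp [hx, hy])⟩

theorem exists_le_embed_eq {p : Fin a × Fin b} {x y : ℤ} (hx : 0 ≤ x) (hy : 0 ≤ y)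
    (h : (x, y) ≤ embed p) : ∃ q ≤ p, embed q = (x, y) := by
  obtain ⟨q, hq⟩ := exists_embed_eq (a := a) (b := b) hx hy
    (h.1.trans_lt (by simp [embed])) (h.2.trans_lt (by simp [embed]))
  exact ⟨q, embed_le_embed.1 (hq ▸ h), hq⟩

def extend (I : Finset (Fin a × Fin b)) : Set (ℤ × ℤ) :=
  {z | z.1 < 0 ∨ z.2 < 0} ∪ embed '' (I : Set (Fin a × Fin b))

theorem embed_mem_extend {p : Fin a × Fin b} : embed p ∈ extend I ↔ p ∈ I := by
  rw [extend, Set.mem_union, embed_injective.mem_set_image, Finset.mem_coe]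
  exact or_iff_right (by simp [embed])

theorem isLowerSet_extend (hI : IsLowerSet (I : Set (Fin a × Fin b))) :
    IsLowerSet (extend I) := by
  rintro z w hwz (hneg | ⟨p, hp, rfl⟩)
  · exact Or.inl (hneg.imp hwz.1.trans_lt hwz.2.trans_lt)
  · by_cases hneg : w.1 < 0 ∨ w.2 < 0
    · exact Or.inl hneg
    · push Not at hneg
      obtain ⟨q, hqp, hq⟩ := exists_le_embed_eq hneg.1 hneg.2 hwz
      exact Or.inr ⟨q, hI hqp hp, hq⟩

def fileCut (I : Finset (Fin a × Fin b)) (k : ℤ) : ℤ :=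
  max 0 (-k) + (I.filter (fun p => file p = k)).card

theorem ht_eq_fileCut (k : ℤ) : ht a b I k = 2 * fileCut I k + k := by
  rw [fileCut, ht, abs_eq_max_neg]
  change max k (-k) + 2 * ((I.filter (fun p => file p = k)).card : ℤ) = _
  omega

theorem fileCut_le_of_forall_lt {k x : ℤ} (hx : max 0 (-k) ≤ x)
    (h : ∀ q ∈ I, file q = k → ((q.1 : ℕ) : ℤ) < x) : fileCut I k ≤ x := by
  have hcard : (I.filter (fun p => file p = k)).card ≤ (Finset.Ico (max 0 (-k)) x).card := by
    refine Finset.card_le_card_of_injOn (fun q => ((q.1 : ℕ) : ℤ)) (fun q hq => ?_)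
      (fun q hq r hr hqr => ?_)
    · rw [Finset.coe_filter, Set.mem_ofPred_eq] at hq
      have hqx := h q hq.1 hq.2
      have hqk := hq.2
      simp only [file, Finset.coe_Ico, Set.mem_Ico] at hqk ⊢
      omega
    · rw [Finset.coe_filter, Set.mem_ofPred_eq] at hq hr
      have hfile := hq.2.trans hr.2.symm
      simp only [file] at hfile hqr
      exact embed_injective (embed_eq_iff.2 ⟨hqr, by omega⟩)
  rw [Int.card_Ico] at hcard
  unfold fileCut
  omega

theorem lt_fileCut_of_mem (hI : IsLowerSet (I : Set (Fin a × Fin b))) {p : Fin a × Fin b}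
    (hp : p ∈ I) : ((p.1 : ℕ) : ℤ) < fileCut I (file p) := by
  have hcard : (Finset.Icc (max 0 (-file p)) (p.1 : ℕ)).card
      ≤ (I.filter (fun q => file q = file p)).card := by
    refine Finset.card_le_card_of_surjOn (fun q => ((q.1 : ℕ) : ℤ)) (fun x hx => ?_)
    simp only [Finset.coe_Icc, Set.mem_Icc] at hx
    obtain ⟨q, hqp, hq⟩ := exists_le_embed_eq (x := x) (y := x + file p) (by omega) (by omega)
      (Prod.mk_le_mk.2 ⟨hx.2, by unfold file; omega⟩)
    obtain ⟨hq₁, hq₂⟩ := embed_eq_iff.1 hq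
    refine ⟨q, ?_, hq₁⟩
    rw [Finset.coe_filter, Set.mem_ofPred_eq]
    exact ⟨hI hqp hp, by unfold file at hq₂ ⊢; omega⟩
  rw [Int.card_Icc] at hcard
  unfold fileCut
  omega

theorem max_le_fileCut (k : ℤ) : max 0 (-k) ≤ fileCut I k :=
  le_add_of_nonneg_right (Nat.cast_nonneg _)

theorem fileCut_le_min {k : ℤ} (hk₁ : -a ≤ k) (hk₂ : k ≤ b) :
    fileCut I k ≤ min (a : ℤ) (b - k) :=
  fileCut_le_of_forall_lt (by omega) fun q _ hq => by
    have := q.1.isLt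
    have := q.2.isLt
    unfold file at hq
    omega

theorem mem_extend_iff (hI : IsLowerSet (I : Set (Fin a × Fin b))) (x y : ℤ) :
    (x, y) ∈ extend I ↔ x < fileCut I (y - x) := by
  have hlow := max_le_fileCut (I := I) (y - x)
  by_cases hneg : x < 0 ∨ y < 0
  · exact iff_of_true (Or.inl hneg) (by omega)
  push Not at hneg
  simp only [extend, Set.mem_union, Set.mem_ofPred_eq, Set.mem_image, Finset.mem_coe,
    embed_eq_iff]
  constructor
  · rintro (h | ⟨p, hp, rfl, rfl⟩)
    · omega
    · exact lt_fileCut_of_mem hI hp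
  · intro hlt
    by_contra hout
    refine hlt.not_ge (fileCut_le_of_forall_lt (by omega) fun q hq hqk => ?_)
    by_contra! hxq
    unfold file at hqk
    obtain ⟨r, hrq, hr⟩ := exists_le_embed_eq hneg.1 hneg.2
      (Prod.mk_le_mk.2 ⟨hxq, by omega⟩ : (x, y) ≤ embed q)
    exact hout (Or.inr ⟨r, hI hrq hq, embed_eq_iff.1 hr⟩)

theorem minimal_not_mem_extend_iff {p : Fin a × Fin b} :
    Minimal (· ∉ extend I) (embed p) ↔ Minimal (· ∉ I) p := by
  constructor
  · exact fun h => ⟨embed_mem_extend.not.1 h.prop, fun q hq hqp =>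
      embed_le_embed.1 (h.2 (embed_mem_extend.not.2 hq) (embed_le_embed.2 hqp))⟩
  · refine fun h => ⟨embed_mem_extend.not.2 h.prop, fun ⟨x, y⟩ hw hwp => ?_⟩
    have hx : 0 ≤ x := le_of_not_gt fun hx => hw (Or.inl (Or.inl hx))
    have hy : 0 ≤ y := le_of_not_gt fun hy => hw (Or.inl (Or.inr hy))
    obtain ⟨q, hqp, hq⟩ := exists_le_embed_eq hx hy hwp
    rw [← hq] at hw ⊢
    exact embed_le_embed.2 (h.2 (embed_mem_extend.not.1 hw) hqp)

theorem maximal_mem_extend_iff {p : Fin a × Fin b} :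
    Maximal (· ∈ extend I) (embed p) ↔ Maximal (· ∈ I) p := by
  constructor
  · exact fun h => ⟨embed_mem_extend.1 h.prop, fun q hq hpq =>
      embed_le_embed.1 (h.2 (embed_mem_extend.2 hq) (embed_le_embed.2 hpq))⟩
  · refine fun h => ⟨embed_mem_extend.2 h.prop, fun w hw hpw => ?_⟩
    rcases hw with hneg | ⟨q, hq, rfl⟩
    · rcases hneg with h | h
      exacts [absurd ((Nat.cast_nonneg _).trans hpw.1) h.not_ge,
        absurd ((Nat.cast_nonneg _).trans hpw.2) h.not_ge]
    · exact embed_le_embed.2 (h.2 hq (embed_le_embed.1 hpw))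

theorem sgn_eq_fileCut (i : ℕ) :
    sgn a b I i = 2 * (fileCut I (i - a) - fileCut I (i - a - 1)) + 1 := by
  rw [sgn, ht_eq_fileCut, ht_eq_fileCut]
  ring

theorem sgn_valley_iff (hI : IsLowerSet (I : Set (Fin a × Fin b))) {i : ℕ} (hi₁ : 1 ≤ i)
    (hi₂ : i ≤ a + b - 1) :
    (sgn a b I i = -1 ∧ sgn a b I (i + 1) = 1) ↔
      ∃ p, Minimal (· ∉ I) p ∧ file p = i - a := by
  have hS := isLowerSet_extend hI
  have hg := mem_extend_iff hI
  rw [sgn_eq_fileCut, sgn_eq_fileCut, Nat.cast_succ, add_sub_right_comm, add_sub_cancel_right]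
  set k : ℤ := i - a
  have hpred := fileCut_le_min (I := I) (k := k - 1) (by omega) (by omega)
  have hsucc := fileCut_le_min (I := I) (k := k + 1) (by omega) (by omega)
  have hlow := max_le_fileCut (I := I) k
  constructor
  · intro h
    obtain ⟨p, hp⟩ := exists_embed_eq (a := a) (b := b) (x := fileCut I k)
      (y := fileCut I k + k) (by omega) (by omega) (by omega) (by omega)
    refine ⟨p, minimal_not_mem_extend_iff.1 ?_, ?_⟩
    · rw [hp, minimal_not_mem_iff_of_cut hS hg (k := k) (by ring)]
      omega
    · obtain ⟨h₁, h₂⟩ := embed_eq_iff.1 hp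
      unfold file
      omega
  · rintro ⟨p, hp, hpk⟩
    have := (minimal_not_mem_iff_of_cut hS hg hpk).1 (minimal_not_mem_extend_iff.2 hp)
    omega

theorem sgn_peak_iff (hI : IsLowerSet (I : Set (Fin a × Fin b))) {i : ℕ} (hi₁ : 1 ≤ i)
    (hi₂ : i ≤ a + b - 1) :
    (sgn a b I i = 1 ∧ sgn a b I (i + 1) = -1) ↔
      ∃ p, Maximal (· ∈ I) p ∧ file p = i - a := by
  have hS := isLowerSet_extend hI
  have hg := mem_extend_iff hI
  rw [sgn_eq_fileCut, sgn_eq_fileCut, Nat.cast_succ, add_sub_right_comm, add_sub_cancel_right]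
  set k : ℤ := i - a
  have hcut := fileCut_le_min (I := I) (k := k) (by omega) (by omega)
  have hpred := max_le_fileCut (I := I) (k - 1)
  have hsucc := max_le_fileCut (I := I) (k + 1)
  constructor
  · intro h
    obtain ⟨p, hp⟩ := exists_embed_eq (a := a) (b := b) (x := fileCut I k - 1)
      (y := fileCut I k - 1 + k) (by omega) (by omega) (by omega) (by omega)
    refine ⟨p, maximal_mem_extend_iff.1 ?_, ?_⟩
    · rw [hp, maximal_mem_iff_of_cut hS hg (k := k) (by ring)]
      omega
    · obtain ⟨h₁, h₂⟩ := embed_eq_iff.1 hp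
      unfold file
      omega
  · rintro ⟨p, hp, hpk⟩
    have := (maximal_mem_iff_of_cut hS hg hpk).1 (maximal_mem_extend_iff.2 hp)
    omega

end Grid

section Rowmotion

variable {P : Type*} [PartialOrder P] [Fintype P] {I : Finset P}

theorem mem_rowmotion {y : P} : y ∈ rowmotion I ↔ ∃ m, Minimal (· ∉ I) m ∧ y ≤ m := by
  simp only [rowmotion, Finset.mem_filter, Finset.mem_univ, true_and, minimal_iff, and_assoc]
  exact exists_congr fun m => and_congr_right' <| and_congr_left' <|
    forall₂_congr fun z _ => imp_congr_right fun _ => eq_comm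

theorem isLowerSet_rowmotion : IsLowerSet (rowmotion I : Set P) := fun _ _ hyz hz => by
  obtain ⟨m, hm, hzm⟩ := mem_rowmotion.1 hz
  exact mem_rowmotion.2 ⟨m, hm, hyz.trans hzm⟩

theorem maximal_mem_rowmotion_iff {p : P} :
    Maximal (· ∈ rowmotion I) p ↔ Minimal (· ∉ I) p := by
  constructor
  · intro h
    obtain ⟨m, hm, hpm⟩ := mem_rowmotion.1 h.prop
    rwa [le_antisymm hpm (h.2 (mem_rowmotion.2 ⟨m, hm, le_rfl⟩) hpm)]
  · refine fun h => ⟨mem_rowmotion.2 ⟨p, h, le_rfl⟩, fun z hz hpz => ?_⟩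
    obtain ⟨m, hm, hzm⟩ := mem_rowmotion.1 hz
    exact hzm.trans (hm.2 h.prop (hpz.trans hzm))

end Rowmotion

end GridIdeal

theorem rowmotion_sign_word_blocks_general
    (a b : ℕ)
    (I : Finset (Fin a × Fin b)) (hI : IsLowerSet (↑I : Set (Fin a × Fin b)))
    (i : ℕ) (hi1 : 1 ≤ i) (hi2 : i ≤ a + b - 1) :
    (sgn a b I i = -1 ∧ sgn a b I (i + 1) = 1) ↔
      (sgn a b (rowmotion I) i = 1 ∧ sgn a b (rowmotion I) (i + 1) = -1) := by
  rw [GridIdeal.sgn_valley_iff hI hi1 hi2,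
    GridIdeal.sgn_peak_iff GridIdeal.isLowerSet_rowmotion hi1 hi2]
  simp_rw [GridIdeal.maximal_mem_rowmotion_iff]

theorem rowmotion_sign_word_blocks
    (a b : ℕ) (ha : 1 ≤ a) (hb : 1 ≤ b)
    (I : Finset (Fin a × Fin b)) (hI : IsLowerSet (↑I : Set (Fin a × Fin b)))
    (i : ℕ) (hi1 : 1 ≤ i) (hi2 : i ≤ a + b - 1) :
    (sgn a b I i = -1 ∧ sgn a b I (i + 1) = 1) ↔
      (sgn a b (rowmotion I) i = 1 ∧ sgn a b (rowmotion I) (i + 1) = -1) :=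
  rowmotion_sign_word_blocks_general a b I hI i hi1 hi2
end

section
/- Let a, b be positive integers. The cardinality statistic I ↦ #I is ab/2-mesic under the action of rowmotion Φ_J on J([a]×[b]): for every Φ_J-orbit O ⊆ J([a]×[b]), (1/#O)·Σ_{I∈O} #I = ab/2. -/
/-!
An order ideal `I` of `[a] × [b]` is encoded by its Stanley–Thomas word, a cyclic binary word of
length `a + b` with `b` ones: position `p < a` records whether row `p` ends in a corner of `I`, and
position `a + c` whether no row of `I` has length `c + 1`. A cell `(i, j)` lies in `I` iff the
window `[i, a + j)` of the word contains more than `j` ones, and rowmotion rotates the word by one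
step. After `i + j + 1` rotations the window of `(i, j)` is the complement of the window of the
antipodal cell `(a - 1 - i, b - 1 - j)`, which gives reciprocity:
`(i, j) ∈ Φ^(i+j+1) I ↔ (a - 1 - i, b - 1 - j) ∉ I`. Applied twice it gives `Φ^(a+b) = id`,
and then in a rowmotion-stable family `O` of ideals every cell and its antipode together lie in
exactly `#O` members, so twice the total size is `a * b * #O`.
-/

open Finset
open scoped Classical

section Rowmotion

variable {P : Type*} [PartialOrder P] [Fintype P]

theorem mem_rowmotion {I : Finset P} {y : P} :
    y ∈ rowmotion I ↔ ∃ m, m ∉ I ∧ (∀ z ∉ I, z ≤ m → z = m) ∧ y ≤ m := by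
  simp [rowmotion]

theorem isLowerSet_rowmotion (I : Finset P) : IsLowerSet (rowmotion I : Set P) := by
  intro x y hyx hx
  simp only [mem_coe, mem_rowmotion] at hx ⊢
  obtain ⟨m, hm, hmin, hxm⟩ := hx
  exact ⟨m, hm, hmin, hyx.trans hxm⟩

theorem isLowerSet_iterate_rowmotion {I : Finset P} (hI : IsLowerSet (I : Set P)) :
    ∀ k, IsLowerSet (rowmotion^[k] I : Set P)
  | 0 => hI
  | k + 1 => by rw [Function.iterate_succ_apply']; exact isLowerSet_rowmotion _

end Rowmotion

section WindowCount

noncomputable def windowCount (w : ℕ → Prop) (s e : ℕ) : ℕ :=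
  ∑ p ∈ Ico s e, if w p then 1 else 0

variable {w w' : ℕ → Prop}

theorem windowCount_congr {s e : ℕ} (h : ∀ p, s ≤ p → p < e → (w p ↔ w' p)) :
    windowCount w s e = windowCount w' s e :=
  sum_congr rfl fun p hp => if_congr (h p (mem_Ico.1 hp).1 (mem_Ico.1 hp).2) rfl rfl

theorem windowCount_add (w : ℕ → Prop) {s m e : ℕ} (hsm : s ≤ m) (hme : m ≤ e) :
    windowCount w s m + windowCount w m e = windowCount w s e :=
  sum_Ico_consecutive _ hsm hme

theorem windowCount_succ_right {s e : ℕ} (hse : s ≤ e) :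
    windowCount w s (e + 1) = windowCount w s e + if w e then 1 else 0 :=
  sum_Ico_succ_top hse _

theorem windowCount_eq_zero {s e : ℕ} (h : ∀ p, s ≤ p → p < e → ¬ w p) :
    windowCount w s e = 0 :=
  sum_eq_zero fun p hp => if_neg (h p (mem_Ico.1 hp).1 (mem_Ico.1 hp).2)

theorem windowCount_add_windowCount_not (w : ℕ → Prop) (s e : ℕ) :
    windowCount w s e + windowCount (fun p => ¬ w p) s e = e - s := by
  rw [windowCount, windowCount, ← sum_add_distrib, ← Nat.card_Ico s e, card_eq_sum_ones]
  exact sum_congr rfl fun p _ => by by_cases hp : w p <;> simp [hp]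

theorem windowCount_shift (r : ℕ) (h : ∀ p, w' (p + r) ↔ w p) (s e : ℕ) :
    windowCount w' (s + r) (e + r) = windowCount w s e := by
  rw [windowCount, ← sum_Ico_add']
  exact sum_congr rfl fun p _ => if_congr (h p) rfl rfl

theorem windowCount_add_period {n : ℕ} (h : ∀ p, w (p + n) ↔ w p) (s : ℕ) :
    windowCount w s (s + n) = windowCount w 0 n := by
  have h₁ := windowCount_add w (Nat.zero_le s) (Nat.le_add_right s n)
  have h₂ := windowCount_add w (Nat.zero_le n) (Nat.le_add_left n s)
  have h₃ := windowCount_shift n h 0 s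
  rw [zero_add] at h₃
  omega

end WindowCount

section RowWord

variable {a : ℕ} {l : ℕ → ℕ}

def rowWord (a : ℕ) (l : ℕ → ℕ) (p : ℕ) : Prop :=
  if p < a then l (p + 1) < l p else p - a + 1 ∉ (range a).image l

theorem windowCount_rowWord_rows (hl : Antitone l) (hla : l a = 0) {i : ℕ} (hi : i ≤ a) :
    windowCount (rowWord a l) i a = windowCount (fun v => v + 1 ∈ (range a).image l) 0 (l i) := by
  induction hi using Nat.decreasingInduction with
  | self => simp [windowCount, hla]
  | of_succ i hia ih =>
    have hstep : windowCount (rowWord a l) i a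
        = windowCount (rowWord a l) (i + 1) a + if l (i + 1) < l i then 1 else 0 := by
      rw [← windowCount_add _ (i.le_add_right 1) hia, windowCount, Nat.Ico_succ_singleton,
        sum_singleton, rowWord, if_pos hia, add_comm]
      congr
    rw [hstep, ih, ← windowCount_add _ (Nat.zero_le _) (hl (i.le_add_right 1))]
    congr 1
    rcases (hl (i.le_add_right 1)).lt_or_eq with hlt | heq
    · obtain ⟨m, hm⟩ : ∃ m, l i = m + 1 := ⟨l i - 1, by omega⟩
      rw [if_pos hlt, hm, windowCount_succ_right (by omega),
        if_pos (hm ▸ mem_image_of_mem l (mem_range.2 hia)), windowCount_eq_zero]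
      rintro v hv hvm hmem
      obtain ⟨t, ht, hvt⟩ := mem_image.1 hmem
      rcases le_or_gt t i with hti | hit
      · have := hl hti
        omega
      · have := hl (show i + 1 ≤ t by omega)
        omega
    · rw [if_neg (by omega), heq]
      simp [windowCount]

theorem windowCount_rowWord_columns (j : ℕ) :
    windowCount (rowWord a l) a (a + j)
      = windowCount (fun v => v + 1 ∉ (range a).image l) 0 j := by
  rw [← windowCount_shift a (fun p => ?_) 0 j, zero_add, add_comm j]
  rw [rowWord, if_neg (by omega), Nat.add_sub_cancel]

theorem lt_iff_windowCount_rowWord (hl : Antitone l) (hla : l a = 0) {i : ℕ} (hi : i < a)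
    (j : ℕ) : j < l i ↔ j + 1 ≤ windowCount (rowWord a l) i (a + j) := by
  rw [← windowCount_add _ hi.le (Nat.le_add_right a j), windowCount_rowWord_rows hl hla hi.le,
    windowCount_rowWord_columns]
  have hcompl := windowCount_add_windowCount_not (fun v => v + 1 ∈ (range a).image l) 0 j
  constructor
  · intro hj
    obtain ⟨m, hm⟩ : ∃ m, l i = m + 1 := ⟨l i - 1, by omega⟩
    rw [hm, windowCount_succ_right (by omega),
      if_pos (hm ▸ mem_image_of_mem l (mem_range.2 hi))]
    have := windowCount_add (fun v => v + 1 ∈ (range a).image l) (Nat.zero_le j)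
      (show j ≤ m by omega)
    omega
  · intro h
    by_contra hj
    have := windowCount_add (fun v => v + 1 ∈ (range a).image l) (Nat.zero_le (l i))
      (not_lt.1 hj)
    omega

theorem windowCount_rowWord_total (hl : Antitone l) (hla : l a = 0) {b : ℕ} (hb : l 0 ≤ b) :
    windowCount (rowWord a l) 0 (a + b) = b := by
  rw [← windowCount_add _ (Nat.zero_le a) (Nat.le_add_right a b),
    windowCount_rowWord_rows hl hla (Nat.zero_le a), windowCount_rowWord_columns]
  have hsplit := windowCount_add (fun v => v + 1 ∈ (range a).image l) (Nat.zero_le _) hb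
  have hnone : windowCount (fun v => v + 1 ∈ (range a).image l) (l 0) b = 0 := by
    refine windowCount_eq_zero fun v hv _ hmem => ?_
    obtain ⟨t, -, hvt⟩ := mem_image.1 hmem
    have := hl (Nat.zero_le t)
    omega
  have hcompl := windowCount_add_windowCount_not (fun v => v + 1 ∈ (range a).image l) 0 b
  omega

end RowWord

section Grid

variable {a b : ℕ} {I : Finset (Fin a × Fin b)}

def rowLength (I : Finset (Fin a × Fin b)) (i : ℕ) : ℕ := #{x ∈ I | (x.1 : ℕ) = i}

theorem rowLength_eq_zero (I : Finset (Fin a × Fin b)) {i : ℕ} (hi : a ≤ i) :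
    rowLength I i = 0 := by
  rw [rowLength, card_eq_zero, filter_eq_empty_iff]
  intro x _
  have := x.1.isLt
  omega

theorem rowLength_le (I : Finset (Fin a × Fin b)) (i : ℕ) : rowLength I i ≤ b := by
  calc rowLength I i ≤ #(univ : Finset (Fin b)) := by
        refine card_le_card_of_injOn Prod.snd (fun _ _ => mem_coe.2 (mem_univ _)) ?_
        intro x hx y hy hxy
        simp only [coe_filter, Set.mem_ofPred_eq] at hx hy
        exact Prod.ext (Fin.ext (hx.2.trans hy.2.symm)) hxy
    _ = b := by simp

theorem mem_iff_lt_rowLength (hI : IsLowerSet (I : Set (Fin a × Fin b))) (i : Fin a)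
    (j : Fin b) : (i, j) ∈ I ↔ (j : ℕ) < rowLength I i := by
  constructor
  · intro hij
    have hsub : (Iic j).image (Prod.mk i) ⊆ {x ∈ I | (x.1 : ℕ) = i} := by
      intro x hx
      obtain ⟨j', hj', rfl⟩ := mem_image.1 hx
      have hle : (i, j') ≤ (i, j) := ⟨le_rfl, mem_Iic.1 hj'⟩
      exact mem_filter.2 ⟨hI hle hij, rfl⟩
    have := card_le_card hsub
    rwa [card_image_of_injective _ (Prod.mk_right_injective i), Fin.card_Iic] at this
  · intro hlt
    by_contra hij
    have hsub : {x ∈ I | (x.1 : ℕ) = i} ⊆ (Iio j).image (Prod.mk i) := by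
      intro x hx
      obtain ⟨hxI, hx1⟩ := mem_filter.1 hx
      have hx : x = (i, x.2) := Prod.ext (Fin.ext hx1) rfl
      refine mem_image.2 ⟨x.2, mem_Iio.2 (lt_of_not_ge fun hle => hij ?_), hx.symm⟩
      exact hI (show (i, j) ≤ x from hx ▸ ⟨le_rfl, hle⟩) hxI
    have := card_le_card hsub
    rw [card_image_of_injective _ (Prod.mk_right_injective i), Fin.card_Iio] at this
    exact absurd hlt (not_lt.2 this)

theorem antitone_rowLength (hI : IsLowerSet (I : Set (Fin a × Fin b))) :
    Antitone (rowLength I) := by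
  intro i i' hii'
  rcases lt_or_ge i' a with hi' | hi'
  · refine le_of_forall_lt fun j hj => ?_
    have hjb : j < b := hj.trans_le (rowLength_le I i')
    have hmem := (mem_iff_lt_rowLength hI ⟨i', hi'⟩ ⟨j, hjb⟩).2 hj
    have hle : ((⟨i, by omega⟩ : Fin a), (⟨j, hjb⟩ : Fin b)) ≤
        (⟨i', hi'⟩, ⟨j, hjb⟩) := ⟨hii', le_rfl⟩
    exact (mem_iff_lt_rowLength hI _ _).1 (hI hle hmem)
  · rw [rowLength_eq_zero I hi']
    exact Nat.zero_le _

def IsAddableRow (I : Finset (Fin a × Fin b)) (k : ℕ) : Prop :=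
  k < a ∧ rowLength I k < b ∧ (k = 0 ∨ rowLength I k < rowLength I (k - 1))

theorem minimal_compl_iff_isAddableRow (hI : IsLowerSet (I : Set (Fin a × Fin b)))
    (m : Fin a × Fin b) :
    (m ∉ I ∧ ∀ z ∉ I, z ≤ m → z = m) ↔
      IsAddableRow I m.1 ∧ (m.2 : ℕ) = rowLength I m.1 := by
  obtain ⟨k, l⟩ := m
  dsimp only
  have hanti := antitone_rowLength hI
  constructor
  · rintro ⟨hm, hmin⟩
    rw [mem_iff_lt_rowLength hI, not_lt] at hm
    have hl : (l : ℕ) = rowLength I k := by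
      by_contra hne
      have hlt : rowLength I k < l := by omega
      have := hmin (k, ⟨rowLength I k, hlt.trans l.isLt⟩)
        (by rw [mem_iff_lt_rowLength hI]; exact lt_irrefl _) ⟨le_rfl, Fin.le_def.2 hlt.le⟩
      simp only [Prod.ext_iff, Fin.ext_iff] at this
      omega
    refine ⟨⟨k.isLt, hl ▸ l.isLt, ?_⟩, hl⟩
    refine (Nat.eq_zero_or_pos k).imp id fun hk => lt_of_not_ge fun hle => ?_
    have := hmin (⟨k - 1, by omega⟩, l) (by rw [mem_iff_lt_rowLength hI]; simp only; omega)
      ⟨Fin.le_def.2 (Nat.sub_le _ _), le_rfl⟩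
    simp only [Prod.ext_iff, Fin.ext_iff] at this
    omega
  · rintro ⟨⟨-, -, hk⟩, hl⟩
    refine ⟨by rw [mem_iff_lt_rowLength hI]; omega, ?_⟩
    rintro ⟨k', l'⟩ hz ⟨hkk : (k' : ℕ) ≤ k, hll : (l' : ℕ) ≤ l⟩
    rw [mem_iff_lt_rowLength hI, not_lt] at hz
    have := hanti hkk
    have hk' : (k' : ℕ) = k := by
      by_contra hne
      rcases hk with hk | hk
      · omega
      · have := hanti (show (k' : ℕ) ≤ k - 1 by omega)
        omega
    exact Prod.ext (Fin.ext hk') (Fin.ext (show (l' : ℕ) = l by omega))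

theorem lt_rowLength_rowmotion_iff (hI : IsLowerSet (I : Set (Fin a × Fin b))) (k : ℕ)
    {j : ℕ} (hj : j < b) :
    j < rowLength (rowmotion I) k ↔ ∃ k' ≥ k, IsAddableRow I k' ∧ j ≤ rowLength I k' := by
  rcases lt_or_ge k a with hk | hk
  · rw [← mem_iff_lt_rowLength (isLowerSet_rowmotion I) ⟨k, hk⟩ ⟨j, hj⟩, mem_rowmotion]
    constructor
    · rintro ⟨m, hm, hmin, hkm, hjm⟩
      obtain ⟨hadd, hval⟩ := (minimal_compl_iff_isAddableRow hI m).1 ⟨hm, hmin⟩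
      exact ⟨m.1, hkm, hadd, hval ▸ hjm⟩
    · rintro ⟨k', hk', hadd, hjk⟩
      obtain ⟨hm, hmin⟩ := (minimal_compl_iff_isAddableRow hI
        (⟨k', hadd.1⟩, ⟨rowLength I k', hadd.2.1⟩)).2 ⟨hadd, rfl⟩
      exact ⟨_, hm, hmin, hk', hjk⟩
  · rw [rowLength_eq_zero _ hk]
    simp only [Nat.not_lt_zero, false_iff, not_exists, not_and]
    intro k' hk' hadd
    exact absurd hadd.1 (by omega)

theorem rowLength_rowmotion_of_isAddableRow (hI : IsLowerSet (I : Set (Fin a × Fin b))) {k : ℕ}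
    (hk : IsAddableRow I k) : rowLength (rowmotion I) k = rowLength I k + 1 := by
  refine eq_of_forall_lt_iff fun j => ?_
  rcases lt_or_ge j b with hj | hj
  · rw [lt_rowLength_rowmotion_iff hI k hj, Nat.lt_succ_iff]
    exact ⟨fun ⟨k', hk', _, hjk⟩ => hjk.trans (antitone_rowLength hI hk'),
      fun hjk => ⟨k, le_rfl, hk, hjk⟩⟩
  · have := rowLength_le (rowmotion I) k
    have := hk.2.1
    constructor <;> intro <;> omega

theorem rowLength_rowmotion_of_not_isAddableRow (hI : IsLowerSet (I : Set (Fin a × Fin b)))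
    {k : ℕ} (hk : ¬ IsAddableRow I k) :
    rowLength (rowmotion I) k = rowLength (rowmotion I) (k + 1) := by
  refine eq_of_forall_lt_iff fun j => ?_
  rcases lt_or_ge j b with hj | hj
  · rw [lt_rowLength_rowmotion_iff hI k hj, lt_rowLength_rowmotion_iff hI (k + 1) hj]
    constructor
    · rintro ⟨k', hk', hadd, hjk⟩
      exact ⟨k', lt_of_le_of_ne hk' fun h => hk (h ▸ hadd), hadd, hjk⟩
    · rintro ⟨k', hk', hadd, hjk⟩
      exact ⟨k', by omega, hadd, hjk⟩
  · have := rowLength_le (rowmotion I) k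
    have := rowLength_le (rowmotion I) (k + 1)
    constructor <;> intro <;> omega

theorem rowLength_rowmotion_succ_le (hI : IsLowerSet (I : Set (Fin a × Fin b))) (k : ℕ) :
    rowLength (rowmotion I) (k + 1) ≤ rowLength I k := by
  refine le_of_forall_lt fun j hj => ?_
  obtain ⟨k', hk', hadd, hjk⟩ :=
    (lt_rowLength_rowmotion_iff hI (k + 1) (hj.trans_le (rowLength_le _ _))).1 hj
  rcases hadd.2.2 with h0 | hlt
  · omega
  · have := antitone_rowLength hI (show k ≤ k' - 1 by omega)
    omega

theorem rowLength_rowmotion_succ_lt_iff (hI : IsLowerSet (I : Set (Fin a × Fin b))) (k : ℕ) :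
    rowLength (rowmotion I) (k + 1) < rowLength (rowmotion I) k ↔ IsAddableRow I k := by
  by_cases hk : IsAddableRow I k
  · have := rowLength_rowmotion_succ_le hI k
    simp only [hk, iff_true, rowLength_rowmotion_of_isAddableRow hI hk]
    omega
  · simp [hk, rowLength_rowmotion_of_not_isAddableRow hI hk]

theorem succ_mem_image_rowLength_rowmotion_iff (hI : IsLowerSet (I : Set (Fin a × Fin b)))
    {j : ℕ} (hj : j < b) :
    j + 1 ∈ (range a).image (rowLength (rowmotion I)) ↔
      j ∈ (range a).image (rowLength I) := by
  simp only [mem_image, mem_range]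
  constructor
  · rintro ⟨i, -, hij⟩
    obtain ⟨k, hik, hadd, hjk⟩ := (lt_rowLength_rowmotion_iff hI i hj).1 (by omega)
    have := antitone_rowLength (isLowerSet_rowmotion I) hik
    rw [rowLength_rowmotion_of_isAddableRow hI hadd] at this
    exact ⟨k, hadd.1, by omega⟩
  · intro h
    obtain ⟨hka, hkj⟩ := Nat.find_spec h
    -- the first row of length `j` can be extended
    have hadd : IsAddableRow I (Nat.find h) := by
      refine ⟨hka, by omega, (Nat.eq_zero_or_pos _).imp id fun hpos => ?_⟩
      have hne := Nat.find_min h (show Nat.find h - 1 < Nat.find h by omega)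
      have hle := antitone_rowLength hI (Nat.sub_le (Nat.find h) 1)
      omega
    exact ⟨Nat.find h, hka, by rw [rowLength_rowmotion_of_isAddableRow hI hadd, hkj]⟩

theorem rowWord_rowmotion_succ (hI : IsLowerSet (I : Set (Fin a × Fin b))) {p : ℕ}
    (hp : p + 1 < a + b) :
    rowWord a (rowLength (rowmotion I)) (p + 1) ↔ rowWord a (rowLength I) p := by
  have hanti := antitone_rowLength hI
  rcases lt_trichotomy (p + 1) a with h | rfl | h
  · rw [rowWord, rowWord, if_pos h, if_pos (by omega), rowLength_rowmotion_succ_lt_iff hI]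
    have := rowLength_le I p
    refine ⟨fun hadd => ?_, fun hlt => ⟨h, by omega, Or.inr hlt⟩⟩
    rcases hadd.2.2 with h0 | hlt
    · omega
    · exact hlt
  · rw [rowWord, rowWord, if_neg (by omega), if_pos (by omega), Nat.sub_self, zero_add,
      succ_mem_image_rowLength_rowmotion_iff hI (by omega), rowLength_eq_zero I le_rfl]
    simp only [mem_image, mem_range, not_exists, not_and]
    refine ⟨fun h0 => Nat.pos_of_ne_zero (h0 p (by omega)), fun hpos t ht h0 => ?_⟩
    have := hanti (show t ≤ p by omega)
    omega
  · rw [rowWord, rowWord, if_neg (by omega), if_neg (by omega),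
      show p + 1 - a + 1 = p - a + 1 + 1 by omega,
      succ_mem_image_rowLength_rowmotion_iff hI (by omega)]

theorem rowWord_rowmotion_zero (hI : IsLowerSet (I : Set (Fin a × Fin b))) (ha : 0 < a)
    (hb : 0 < b) :
    rowWord a (rowLength (rowmotion I)) 0 ↔ rowWord a (rowLength I) (a + b - 1) := by
  rw [rowWord, rowWord, if_pos ha, if_neg (by omega), rowLength_rowmotion_succ_lt_iff hI,
    show a + b - 1 - a + 1 = b by omega]
  simp only [IsAddableRow, mem_image, mem_range, not_exists, not_and]
  have := rowLength_le I 0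
  constructor
  · rintro ⟨-, h0b, -⟩ t - ht
    have := antitone_rowLength hI (Nat.zero_le t)
    omega
  · intro h
    exact ⟨ha, lt_of_le_of_ne this (h 0 ha), by simp⟩

def stanleyThomasWord (I : Finset (Fin a × Fin b)) (p : ℕ) : Prop :=
  rowWord a (rowLength I) (p % (a + b))

theorem stanleyThomasWord_add_period (I : Finset (Fin a × Fin b)) (p : ℕ) :
    stanleyThomasWord I (p + (a + b)) ↔ stanleyThomasWord I p := by
  rw [stanleyThomasWord, stanleyThomasWord, Nat.add_mod_right]

theorem stanleyThomasWord_rowmotion (hI : IsLowerSet (I : Set (Fin a × Fin b))) (ha : 0 < a)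
    (hb : 0 < b) (p : ℕ) : stanleyThomasWord (rowmotion I) (p + 1) ↔ stanleyThomasWord I p := by
  have hp := Nat.mod_lt p (show 0 < a + b by omega)
  rw [stanleyThomasWord, stanleyThomasWord, Nat.add_mod_eq_ite,
    Nat.mod_eq_of_lt (show 1 < a + b by omega)]
  split_ifs with h
  · rw [show p % (a + b) + 1 - (a + b) = 0 by omega, show p % (a + b) = a + b - 1 by omega,
      rowWord_rowmotion_zero hI ha hb]
  · exact rowWord_rowmotion_succ hI (by omega)

theorem stanleyThomasWord_iterate_rowmotion (hI : IsLowerSet (I : Set (Fin a × Fin b)))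
    (ha : 0 < a) (hb : 0 < b) (r p : ℕ) :
    stanleyThomasWord (rowmotion^[r] I) (p + r) ↔ stanleyThomasWord I p := by
  induction r with
  | zero => rfl
  | succ r ih =>
    rw [Function.iterate_succ_apply', ← add_assoc,
      stanleyThomasWord_rowmotion (isLowerSet_iterate_rowmotion hI r) ha hb, ih]

theorem windowCount_stanleyThomasWord (hI : IsLowerSet (I : Set (Fin a × Fin b))) :
    windowCount (stanleyThomasWord I) 0 (a + b) = b := by
  refine (windowCount_congr fun p _ hp => ?_).trans (windowCount_rowWord_total
    (antitone_rowLength hI) (rowLength_eq_zero I le_rfl) (rowLength_le I 0))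
  rw [stanleyThomasWord, Nat.mod_eq_of_lt hp]

theorem mem_iff_windowCount_stanleyThomasWord (hI : IsLowerSet (I : Set (Fin a × Fin b)))
    (i : Fin a) (j : Fin b) :
    (i, j) ∈ I ↔ (j : ℕ) + 1 ≤ windowCount (stanleyThomasWord I) i (a + j) := by
  rw [mem_iff_lt_rowLength hI, lt_iff_windowCount_rowWord (antitone_rowLength hI)
    (rowLength_eq_zero I le_rfl) i.isLt]
  have hj := j.isLt
  have hword : windowCount (stanleyThomasWord I) i (a + j)
      = windowCount (rowWord a (rowLength I)) i (a + j) :=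
    windowCount_congr fun p _ hp => by rw [stanleyThomasWord, Nat.mod_eq_of_lt (by omega)]
  rw [hword]

theorem mem_iterate_rowmotion_iff_rev_notMem (hI : IsLowerSet (I : Set (Fin a × Fin b)))
    (i : Fin a) (j : Fin b) : (i, j) ∈ rowmotion^[i + j + 1] I ↔ (i.rev, j.rev) ∉ I := by
  have ha := i.pos
  have hb := j.pos
  have hi := i.isLt
  have hj := j.isLt
  have hJ := isLowerSet_iterate_rowmotion hI (i + j + 1)
  have hshift : windowCount (stanleyThomasWord (rowmotion^[i + j + 1] I)) i (a + j)
      = windowCount (stanleyThomasWord I) (a + b - (j + 1)) (a - (i + 1) + (a + b)) := by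
    rw [← windowCount_shift (a + b) (stanleyThomasWord_add_period _) i (a + j),
      ← windowCount_shift (i + j + 1) (stanleyThomasWord_iterate_rowmotion hI ha hb _)]
    congr 1 <;> omega
  have hsplit := windowCount_add (stanleyThomasWord I)
    (show a - (i + 1) ≤ a + b - (j + 1) by omega)
    (show a + b - (j + 1) ≤ a - (i + 1) + (a + b) by omega)
  rw [windowCount_add_period (stanleyThomasWord_add_period I),
    windowCount_stanleyThomasWord hI] at hsplit
  rw [mem_iff_windowCount_stanleyThomasWord hJ, mem_iff_windowCount_stanleyThomasWord hI,
    Fin.val_rev, Fin.val_rev, hshift, show a + (b - (j + 1)) = a + b - (j + 1) by omega]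
  omega

theorem isPeriodicPt_rowmotion (hI : IsLowerSet (I : Set (Fin a × Fin b))) :
    Function.IsPeriodicPt rowmotion (a + b) I := by
  ext ⟨i, j⟩
  have hsum : a + b = (i + j + 1) + (i.rev + j.rev + 1) := by
    simp only [Fin.val_rev]
    omega
  rw [hsum, Function.iterate_add_apply,
    mem_iterate_rowmotion_iff_rev_notMem (isLowerSet_iterate_rowmotion hI _),
    mem_iterate_rowmotion_iff_rev_notMem hI, Fin.rev_rev, Fin.rev_rev, not_not]

end Grid

section Homomesy

variable {a b : ℕ} {O : Finset (Finset (Fin a × Fin b))}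

theorem card_filter_mem_add_card_filter_rev_mem
    (hlow : ∀ J ∈ O, IsLowerSet (J : Set (Fin a × Fin b)))
    (hstab : ∀ J ∈ O, rowmotion J ∈ O) (i : Fin a) (j : Fin b) :
    #{J ∈ O | (i, j) ∈ J} + #{J ∈ O | (i.rev, j.rev) ∈ J} = #O := by
  have hiter : ∀ k, ∀ J ∈ O, rowmotion^[k] J ∈ O := by
    intro k
    induction k with
    | zero => exact fun J hJ => hJ
    | succ k ih =>
      intro J hJ
      rw [Function.iterate_succ_apply']
      exact hstab _ (ih J hJ)
  have hinv : ∀ J ∈ O, ∀ m n, m + n = a + b → rowmotion^[m] (rowmotion^[n] J) = J :=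
    fun J hJ m n hmn => by
      rw [← Function.iterate_add_apply, hmn]
      exact isPeriodicPt_rowmotion (hlow J hJ)
  have hsum : ((i : ℕ) + j + 1) + ((i.rev : ℕ) + j.rev + 1) = a + b := by
    simp only [Fin.val_rev]
    omega
  -- iterates of rowmotion permute `O` by periodicity, and reciprocity swaps the two conditions
  have hbij : #{J ∈ O | (i, j) ∈ J} = #{J ∈ O | (i.rev, j.rev) ∉ J} := by
    refine card_nbij' (rowmotion^[i.rev + j.rev + 1]) (rowmotion^[i + j + 1]) ?_ ?_ ?_ ?_
    · intro J hJ
      simp only [coe_filter, Set.mem_ofPred_eq] at hJ ⊢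
      refine ⟨hiter _ J hJ.1, ?_⟩
      rw [mem_iterate_rowmotion_iff_rev_notMem (hlow J hJ.1), Fin.rev_rev, Fin.rev_rev, not_not]
      exact hJ.2
    · intro J hJ
      simp only [coe_filter, Set.mem_ofPred_eq] at hJ ⊢
      exact ⟨hiter _ J hJ.1, (mem_iterate_rowmotion_iff_rev_notMem (hlow J hJ.1) i j).2 hJ.2⟩
    · intro J hJ
      exact hinv J (mem_filter.1 hJ).1 _ _ hsum
    · intro J hJ
      exact hinv J (mem_filter.1 hJ).1 _ _ (by omega)
  have := card_filter_add_card_filter_not (s := O) (fun J => (i.rev, j.rev) ∈ J)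
  omega

theorem two_mul_sum_card_eq (hlow : ∀ J ∈ O, IsLowerSet (J : Set (Fin a × Fin b)))
    (hstab : ∀ J ∈ O, rowmotion J ∈ O) : 2 * ∑ J ∈ O, #J = a * b * #O := by
  have hdouble : ∑ J ∈ O, #J = ∑ x : Fin a × Fin b, #{J ∈ O | x ∈ J} := by
    calc ∑ J ∈ O, #J = ∑ J ∈ O, ∑ x : Fin a × Fin b, if x ∈ J then 1 else 0 := by simp
      _ = ∑ x : Fin a × Fin b, ∑ J ∈ O, if x ∈ J then 1 else 0 := sum_comm
      _ = ∑ x : Fin a × Fin b, #{J ∈ O | x ∈ J} := by simp [sum_boole]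
  have hrev : ∑ x : Fin a × Fin b, #{J ∈ O | x ∈ J}
      = ∑ x : Fin a × Fin b, #{J ∈ O | (x.1.rev, x.2.rev) ∈ J} :=
    (Equiv.sum_comp (Fin.revPerm.prodCongr Fin.revPerm) (fun x => #{J ∈ O | x ∈ J})).symm
  calc 2 * ∑ J ∈ O, #J
      = ∑ x : Fin a × Fin b, (#{J ∈ O | x ∈ J} + #{J ∈ O | (x.1.rev, x.2.rev) ∈ J}) := by
        rw [sum_add_distrib, ← hrev, hdouble, two_mul]
    _ = ∑ _x : Fin a × Fin b, #O :=
        sum_congr rfl fun x _ => card_filter_mem_add_card_filter_rev_mem hlow hstab x.1 x.2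
    _ = a * b * #O := by simp

end Homomesy

theorem rowmotion_order_ideal_cardinality_homomesy_general
    (a b : ℕ)
    (O : Finset (Finset (Fin a × Fin b)))
    (hO : ∃ I : Finset (Fin a × Fin b), IsLowerSet (↑I : Set (Fin a × Fin b)) ∧
      ∀ J, J ∈ O ↔ ∃ k : ℕ, rowmotion^[k] I = J) :
    (∑ J ∈ O, (J.card : ℚ)) / O.card = (a : ℚ) * (b : ℚ) / 2 := by
  obtain ⟨I, hI, hOI⟩ := hO
  have hlow : ∀ J ∈ O, IsLowerSet (J : Set (Fin a × Fin b)) := fun J hJ => by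
    obtain ⟨k, rfl⟩ := (hOI J).1 hJ
    exact isLowerSet_iterate_rowmotion hI k
  have hstab : ∀ J ∈ O, rowmotion J ∈ O := fun J hJ => by
    obtain ⟨k, rfl⟩ := (hOI J).1 hJ
    exact (hOI _).2 ⟨k + 1, Function.iterate_succ_apply' _ _ _⟩
  have hcard : (#O : ℚ) ≠ 0 := Nat.cast_ne_zero.2 (card_ne_zero_of_mem ((hOI I).2 ⟨0, rfl⟩))
  have hsum : (2 : ℚ) * ∑ J ∈ O, (#J : ℚ) = a * b * #O := by
    exact_mod_cast two_mul_sum_card_eq hlow hstab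
  rw [div_eq_iff hcard]
  linarith

theorem rowmotion_order_ideal_cardinality_homomesy
    (a b : ℕ) (ha : 1 ≤ a) (hb : 1 ≤ b)
    (O : Finset (Finset (Fin a × Fin b)))
    (hO : ∃ I : Finset (Fin a × Fin b), IsLowerSet (↑I : Set (Fin a × Fin b)) ∧
      ∀ J, J ∈ O ↔ ∃ k : ℕ, rowmotion^[k] I = J) :
    (∑ J ∈ O, (J.card : ℚ)) / O.card = (a : ℚ) * (b : ℚ) / 2 :=
  rowmotion_order_ideal_cardinality_homomesy_general a b O hO
end
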